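/- arXiv:2305.09318 — 3 statements merged into one kernel-verified Lean document; each statement's English description precedes it below -/
import Mathlib

section
/- The strong-perception rate region is contained in the empirical-perception rate region: R^{(s)} ⊆ R^{(e)}, where R^{(s)} := ∪_{γ>0}(R_γ^{(s)-} ∪ R_γ^{(s)+}) and R^{(e)} := ∪_{γ>0} R_γ^{(e)}. -/
open scoped BigOperators
open Finset Filter

noncomputable section

/-- A probability mass function on a finite type. -/
def IsPMF {α : Type*} [Fintype α] (p : α → ℝ) : Prop :=
  (∀ x, 0 ≤ p x) ∧ ∑ x, p x = 1

/-- Total variation distance `sup_A |P(A) - Q(A)|` between two distributions on a finite type. -/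
noncomputable def dTV {α : Type*} [Fintype α] (p q : α → ℝ) : ℝ :=
  ⨆ A : Finset α, |∑ x ∈ A, p x - ∑ x ∈ A, q x|

/-- The i.i.d. (product) distribution on `n`-sequences. -/
noncomputable def prodDist {α : Type*} [Fintype α] (n : ℕ) (p : α → ℝ) :
    (Fin n → α) → ℝ :=
  fun xs => ∏ i, p (xs i)

/-- Empirical distribution (type) of a sequence. -/
noncomputable def emp {α : Type*} [Fintype α] [DecidableEq α] {n : ℕ}
    (xs : Fin n → α) : α → ℝ :=
  fun x => (1 / (n : ℝ)) * ∑ i, if xs i = x then (1 : ℝ) else 0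

/-- Law (pushforward distribution) of a random variable on a finite probability space
with pmf `μ`. -/
noncomputable def law {Ω α : Type*} [Fintype Ω] [DecidableEq α]
    (μ : Ω → ℝ) (f : Ω → α) : α → ℝ :=
  fun a => ∑ ω, if f ω = a then μ ω else 0

/-- Shannon entropy (in nats). -/
noncomputable def entropy {α : Type*} [Fintype α] (p : α → ℝ) : ℝ :=
  -∑ x, p x * Real.log (p x)

/-- Shannon conditional mutual information `I(X;Y|Z)` of a joint pmf on `X × Y × Z`
(the third coordinate is the conditioning variable). -/
noncomputable def condMI {X Y Z : Type*} [Fintype X] [Fintype Y] [Fintype Z]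
    (p : X × Y × Z → ℝ) : ℝ :=
  ∑ x : X, ∑ y : Y, ∑ z : Z,
    p (x, y, z) *
      Real.log
        (p (x, y, z) * (∑ x' : X, ∑ y' : Y, p (x', y', z)) /
          ((∑ y' : Y, p (x, y', z)) * (∑ x' : X, p (x', y, z))))



section RDP

variable {X Z : Type*} [Fintype X] [Fintype Z]

/-- `(X,Z)`-marginal of a joint pmf on `X × Y × Z`. -/
noncomputable def margXZ3 {Y : Type*} [Fintype Y] (q : X × Y × Z → ℝ) : X × Z → ℝ :=
  fun p => ∑ y, q (p.1, y, p.2)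

/-- `X`-marginal of a joint pmf on `X × Y × Z`. -/
noncomputable def margX3 {Y : Type*} [Fintype Y] (q : X × Y × Z → ℝ) : X → ℝ :=
  fun x => ∑ y, ∑ z, q (x, y, z)

/-- `Y`-marginal of a joint pmf on `X × Y × Z`. -/
noncomputable def margY3 {Y : Type*} [Fintype Y] (q : X × Y × Z → ℝ) : Y → ℝ :=
  fun y => ∑ x, ∑ z, q (x, y, z)

/-- Expected per-letter distortion `E[D(X,Y)]` under a joint pmf on `X × Y × Z`. -/
noncomputable def expD3 (q : X × X × Z → ℝ) (D : X → X → ℝ) : ℝ :=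
  ∑ x, ∑ y, ∑ z, q (x, y, z) * D x y

/-- `limsup_{n→∞} d_TV(∏_{i=1}^n P, ∏_{i=1}^n Q)`. -/
noncomputable def limsupTV {α : Type*} [Fintype α] (p q : α → ℝ) : ℝ :=
  Filter.limsup (fun n => dTV (prodDist n p) (prodDist n q)) Filter.atTop

/-- The conditional rate-distortion function
`R(Δ) = inf { I(X;Y|Z) : P_{Y|XZ}, E[D(X,Y)] ≤ Δ }`. -/
noncomputable def Rdist (pXZ : X × Z → ℝ) (D : X → X → ℝ) (Δ : ℝ) : ℝ :=
  sInf {r | ∃ q : X × X × Z → ℝ,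
    IsPMF q ∧ margXZ3 q = pXZ ∧ expD3 q D ≤ Δ ∧ r = condMI q}

/-- `g(R,Δ)`. -/
noncomputable def gFun (pXZ : X × Z → ℝ) (D : X → X → ℝ) (R Δ : ℝ) : ℝ :=
  sInf {v | ∃ q : X × X × Z → ℝ,
    IsPMF q ∧ margXZ3 q = pXZ ∧ condMI q ≤ R ∧ expD3 q D ≤ Δ ∧
      v = limsupTV (margX3 q) (margY3 q)}

/-- `f(Δ) = g(R(Δ),Δ)`. -/
noncomputable def fFun (pXZ : X × Z → ℝ) (D : X → X → ℝ) (Δ : ℝ) : ℝ :=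
  gFun pXZ D (Rdist pXZ D Δ) Δ

/-- The region `R_γ^{(e)}` (tuples `(R, R₀, Δ, Π)`). -/
def RegionE (pXZ : X × Z → ℝ) (D : X → X → ℝ) (γ : ℝ) : Set (ℝ × ℝ × ℝ × ℝ) :=
  {t | ∃ q : X × X × Z → ℝ, IsPMF q ∧ margXZ3 q = pXZ ∧
    0 ≤ t.2.1 ∧ condMI q + γ ≤ t.1 ∧ expD3 q D ≤ t.2.2.1 ∧
    dTV (margX3 q) (margY3 q) ≤ t.2.2.2}

/-- The region `R_γ^{(s)+}` (tuples `(R, R₀, Δ, Π)`). -/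
def RegionSplus (pXZ : X × Z → ℝ) (D : X → X → ℝ) (γ : ℝ) : Set (ℝ × ℝ × ℝ × ℝ) :=
  {t | ∃ q : X × X × Z → ℝ, IsPMF q ∧ margXZ3 q = pXZ ∧
    fFun pXZ D t.2.2.1 ≤ t.2.2.2 ∧ 0 ≤ t.2.1 ∧
    condMI q + γ ≤ t.1 ∧ expD3 q D ≤ t.2.2.1}

/-- Witness conditions for membership in `R_γ^{(s)-}` with auxiliary alphabet `U` and
joint pmf `q` on `X × Y × U × Z` (with `Y = X` the reconstruction alphabet). -/
def SminusWitness (pXZ : X × Z → ℝ) (D : X → X → ℝ) (γ : ℝ)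
    (R R0 Δ Pc : ℝ) (U : Type*) [Fintype U] (q : X × X × U × Z → ℝ) : Prop :=
  IsPMF q ∧
  (∀ x z, (∑ y, ∑ u, q (x, y, u, z)) = pXZ (x, z)) ∧
  -- conditional independence X ⟂ Y | (U,Z)
  (∀ x y u z, (∑ x', ∑ y', q (x', y', u, z)) * q (x, y, u, z) =
      (∑ y', q (x, y', u, z)) * (∑ x', q (x', y, u, z))) ∧
  Pc < fFun pXZ D Δ ∧ 0 < R0 ∧
  -- R ≥ I(X;U|Z) + γ
  condMI (fun p : X × U × Z => ∑ y, q (p.1, y, p.2.1, p.2.2)) + γ ≤ R ∧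
  -- R + R₀ ≥ I(Y;U|Z) + γ
  condMI (fun p : X × U × Z => ∑ x, q (x, p.1, p.2.1, p.2.2)) + γ ≤ R + R0 ∧
  (∑ x, ∑ y, ∑ u, ∑ z, q (x, y, u, z) * D x y) ≤ Δ ∧
  limsupTV (fun x => ∑ y, ∑ u, ∑ z, q (x, y, u, z))
    (fun y => ∑ x, ∑ u, ∑ z, q (x, y, u, z)) ≤ Pc

/-- The region `R_γ^{(s)-}` (tuples `(R, R₀, Δ, Π)`). -/
def RegionSminus (pXZ : X × Z → ℝ) (D : X → X → ℝ) (γ : ℝ) : Set (ℝ × ℝ × ℝ × ℝ) :=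
  {t | ∃ (U : Type) (inst : Fintype U) (q : X × X × U × Z → ℝ),
    @SminusWitness X Z _ _ pXZ D γ t.1 t.2.1 t.2.2.1 t.2.2.2 U inst q}

end RDP

section Codes

variable {X Z : Type*} [Fintype X] [Fintype Z]

/-- Joint distribution of `(X^n, Z^n, K, M, Y^n)` induced by an i.i.d. source `pXZ`,
common randomness `K` uniform on `Fin N0`, a stochastic encoder `enc` and a
stochastic decoder `dec`. -/
noncomputable def codeJoint {n N N0 : ℕ} (pXZ : X × Z → ℝ)
    (enc : (Fin n → X) → (Fin n → Z) → Fin N0 → Fin N → ℝ)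
    (dec : Fin N → (Fin n → Z) → Fin N0 → (Fin n → X) → ℝ) :
    (Fin n → X) × (Fin n → Z) × Fin N0 × Fin N × (Fin n → X) → ℝ :=
  fun w =>
    (∏ i, pXZ (w.1 i, w.2.1 i)) * (1 / (N0 : ℝ)) *
      enc w.1 w.2.1 w.2.2.1 w.2.2.2.1 * dec w.2.2.2.1 w.2.1 w.2.2.1 w.2.2.2.2

/-- Distribution of the reconstruction `Y^n` induced by a code. -/
noncomputable def codeOutY {n N N0 : ℕ} (pXZ : X × Z → ℝ)
    (enc : (Fin n → X) → (Fin n → Z) → Fin N0 → Fin N → ℝ)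
    (dec : Fin N → (Fin n → Z) → Fin N0 → (Fin n → X) → ℝ) :
    (Fin n → X) → ℝ :=
  fun ys => ∑ xs : Fin n → X, ∑ zs : Fin n → Z, ∑ k : Fin N0, ∑ m : Fin N,
    codeJoint pXZ enc dec (xs, zs, k, m, ys)

/-- Joint distribution of `(Y^n, Z^n)` induced by a code. -/
noncomputable def codeYZ {n N N0 : ℕ} (pXZ : X × Z → ℝ)
    (enc : (Fin n → X) → (Fin n → Z) → Fin N0 → Fin N → ℝ)
    (dec : Fin N → (Fin n → Z) → Fin N0 → (Fin n → X) → ℝ) :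
    (Fin n → X) × (Fin n → Z) → ℝ :=
  fun p => ∑ xs : Fin n → X, ∑ k : Fin N0, ∑ m : Fin N,
    codeJoint pXZ enc dec (xs, p.2, k, m, p.1)

/-- Expected average distortion `E[D(X^n,Y^n)]` of a code. -/
noncomputable def codeExpDist {n N N0 : ℕ} (pXZ : X × Z → ℝ)
    (enc : (Fin n → X) → (Fin n → Z) → Fin N0 → Fin N → ℝ)
    (dec : Fin N → (Fin n → Z) → Fin N0 → (Fin n → X) → ℝ)
    (D : X → X → ℝ) : ℝ :=
  ∑ w : (Fin n → X) × (Fin n → Z) × Fin N0 × Fin N × (Fin n → X),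
    codeJoint pXZ enc dec w * ((1 / (n : ℝ)) * ∑ i, D (w.1 i) (w.2.2.2.2 i))

/-- Expected total variation between the empirical distributions of source and
reconstruction, `E[d_TV(P̂_{X^n}, P̂_{Y^n})]`. -/
noncomputable def codeExpEmpTV [DecidableEq X] {n N N0 : ℕ} (pXZ : X × Z → ℝ)
    (enc : (Fin n → X) → (Fin n → Z) → Fin N0 → Fin N → ℝ)
    (dec : Fin N → (Fin n → Z) → Fin N0 → (Fin n → X) → ℝ) : ℝ :=
  ∑ w : (Fin n → X) × (Fin n → Z) × Fin N0 × Fin N × (Fin n → X),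
    codeJoint pXZ enc dec w * dTV (emp w.1) (emp w.2.2.2.2)

/-- `(R, R₀, Δ, Π)` is achievable with respect to the strong perceptual constraint. -/
def AchievableStrong (pXZ : X × Z → ℝ) (D : X → X → ℝ) (R R0 Δ Pc : ℝ) : Prop :=
  ∀ ε > (0 : ℝ), ∃ n₀ : ℕ, ∀ n ≥ n₀,
    ∃ (enc : (Fin n → X) → (Fin n → Z) → Fin ⌊(2 : ℝ) ^ ((n : ℝ) * (R0 + ε))⌋₊ →
          Fin ⌊(2 : ℝ) ^ ((n : ℝ) * (R + ε))⌋₊ → ℝ)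
      (dec : Fin ⌊(2 : ℝ) ^ ((n : ℝ) * (R + ε))⌋₊ → (Fin n → Z) →
          Fin ⌊(2 : ℝ) ^ ((n : ℝ) * (R0 + ε))⌋₊ → (Fin n → X) → ℝ),
      (∀ xs zs k, IsPMF (enc xs zs k)) ∧ (∀ m zs k, IsPMF (dec m zs k)) ∧
      codeExpDist pXZ enc dec D ≤ Δ + ε ∧
      dTV (prodDist n (fun x => ∑ z, pXZ (x, z))) (codeOutY pXZ enc dec) ≤ Pc + ε

/-- `(R, R₀, Δ, Π)` is achievable with respect to the empirical perceptual constraint. -/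
def AchievableEmp [DecidableEq X] (pXZ : X × Z → ℝ) (D : X → X → ℝ)
    (R R0 Δ Pc : ℝ) : Prop :=
  ∀ ε > (0 : ℝ), ∃ n₀ : ℕ, ∀ n ≥ n₀,
    ∃ (enc : (Fin n → X) → (Fin n → Z) → Fin ⌊(2 : ℝ) ^ ((n : ℝ) * (R0 + ε))⌋₊ →
          Fin ⌊(2 : ℝ) ^ ((n : ℝ) * (R + ε))⌋₊ → ℝ)
      (dec : Fin ⌊(2 : ℝ) ^ ((n : ℝ) * (R + ε))⌋₊ → (Fin n → Z) →
          Fin ⌊(2 : ℝ) ^ ((n : ℝ) * (R0 + ε))⌋₊ → (Fin n → X) → ℝ),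
      (∀ xs zs k, IsPMF (enc xs zs k)) ∧ (∀ m zs k, IsPMF (dec m zs k)) ∧
      codeExpDist pXZ enc dec D ≤ Δ + ε ∧
      codeExpEmpTV pXZ enc dec ≤ Pc + ε

/-- `(R, R₀, Δ, Π)` is achievable with respect to the strong perceptual constraint by
codes whose reconstruction `Y^n` together with the side information `Z^n` forms a
jointly i.i.d. sequence. -/
def AchievableStrongIID (pXZ : X × Z → ℝ) (D : X → X → ℝ) (R R0 Δ Pc : ℝ) : Prop :=
  ∀ ε > (0 : ℝ), ∃ n₀ : ℕ, ∀ n ≥ n₀,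
    ∃ (enc : (Fin n → X) → (Fin n → Z) → Fin ⌊(2 : ℝ) ^ ((n : ℝ) * (R0 + ε))⌋₊ →
          Fin ⌊(2 : ℝ) ^ ((n : ℝ) * (R + ε))⌋₊ → ℝ)
      (dec : Fin ⌊(2 : ℝ) ^ ((n : ℝ) * (R + ε))⌋₊ → (Fin n → Z) →
          Fin ⌊(2 : ℝ) ^ ((n : ℝ) * (R0 + ε))⌋₊ → (Fin n → X) → ℝ),
      (∀ xs zs k, IsPMF (enc xs zs k)) ∧ (∀ m zs k, IsPMF (dec m zs k)) ∧
      codeExpDist pXZ enc dec D ≤ Δ + ε ∧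
      dTV (prodDist n (fun x => ∑ z, pXZ (x, z))) (codeOutY pXZ enc dec) ≤ Pc + ε ∧
      (∃ r : X × Z → ℝ, IsPMF r ∧
        ∀ ys zs, codeYZ pXZ enc dec (ys, zs) = ∏ i, r (ys i, zs i))

end Codes

section Lemmas

variable {α : Type*} [Fintype α]

lemma sum_prodDist (n : ℕ) (f : α → ℝ) :
    ∑ xs : Fin n → α, ∏ i, f (xs i) = (∑ x, f x) ^ n := by
  rw [← Fintype.prod_sum (κ := fun _ : Fin n => α) (f := fun _ x => f x)]
  simp

lemma prodDist_pmf {n : ℕ} {p : α → ℝ} (hp : IsPMF p) : IsPMF (prodDist n p) := by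
  constructor
  · intro xs
    exact Finset.prod_nonneg fun i _ => hp.1 _
  · rw [show (∑ xs : Fin n → α, prodDist n p xs) = (∑ x, p x) ^ n from sum_prodDist n p,
      hp.2, one_pow]

lemma dTV_bddAbove (p q : α → ℝ) :
    BddAbove (Set.range fun A : Finset α => |∑ x ∈ A, p x - ∑ x ∈ A, q x|) :=
  Set.Finite.bddAbove (Set.finite_range _)

lemma le_dTV (p q : α → ℝ) (A : Finset α) :
    ∑ x ∈ A, p x - ∑ x ∈ A, q x ≤ dTV p q :=
  le_trans (le_abs_self _) (le_ciSup (dTV_bddAbove p q) A)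

lemma dTV_self (p : α → ℝ) : dTV p p = 0 := by
  simp [dTV, ciSup_const]

lemma sum_subset_le_one {p : α → ℝ} (hp : IsPMF p) (A : Finset α) :
    0 ≤ ∑ x ∈ A, p x ∧ ∑ x ∈ A, p x ≤ 1 := by
  constructor
  · exact Finset.sum_nonneg fun x _ => hp.1 x
  · rw [← hp.2]
    exact Finset.sum_le_sum_of_subset_of_nonneg (Finset.subset_univ A)
      (fun x _ _ => hp.1 x)

lemma dTV_le_one {p q : α → ℝ} (hp : IsPMF p) (hq : IsPMF q) : dTV p q ≤ 1 := by
  apply ciSup_le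
  intro A
  obtain ⟨h1, h2⟩ := sum_subset_le_one hp A
  obtain ⟨h3, h4⟩ := sum_subset_le_one hq A
  rw [abs_le]
  constructor <;> linarith

lemma dTV_nonneg (p q : α → ℝ) : 0 ≤ dTV p q := by
  have := le_ciSup (dTV_bddAbove p q) (∅ : Finset α)
  exact le_trans (by simp) this

end Lemmas
section Hellinger

variable {α : Type*} [Fintype α]

lemma limsupTV_self (p : α → ℝ) : limsupTV p p = 0 := by
  unfold limsupTV
  have : (fun n => dTV (prodDist n p) (prodDist n p)) = fun _ => (0 : ℝ) := by
    funext n; exact dTV_self _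
  rw [this, Filter.limsup_const]

set_option maxHeartbeats 1000000 in
lemma one_le_limsupTV {p q : α → ℝ} (hp : IsPMF p) (hq : IsPMF q) (hne : p ≠ q) :
    1 ≤ limsupTV p q := by
  classical
  set ρ : ℝ := ∑ x, Real.sqrt (p x * q x) with hρdef
  have hρ0 : 0 ≤ ρ := Finset.sum_nonneg fun x _ => Real.sqrt_nonneg _
  have hsq : ∑ x, (Real.sqrt (p x) - Real.sqrt (q x)) ^ 2 = 2 - 2 * ρ := by
    have : ∀ x, (Real.sqrt (p x) - Real.sqrt (q x)) ^ 2
        = p x + q x - 2 * Real.sqrt (p x * q x) := by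
      intro x
      rw [sub_sq, Real.sq_sqrt (hp.1 x), Real.sq_sqrt (hq.1 x),
        Real.sqrt_mul (hp.1 x)]
      ring
    rw [Finset.sum_congr rfl fun x _ => this x]
    rw [Finset.sum_sub_distrib, Finset.sum_add_distrib, hp.2, hq.2, ← Finset.mul_sum]
    ring
  have hpos : 0 < ∑ x, (Real.sqrt (p x) - Real.sqrt (q x)) ^ 2 := by
    obtain ⟨x, hx⟩ : ∃ x, p x ≠ q x := by
      by_contra h
      push_neg at h
      exact hne (funext h)
    apply Finset.sum_pos' (fun y _ => sq_nonneg _)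
    refine ⟨x, Finset.mem_univ x, ?_⟩
    have hne' : Real.sqrt (p x) - Real.sqrt (q x) ≠ 0 := by
      intro h
      exact hx ((Real.sqrt_inj (hp.1 x) (hq.1 x)).mp (by linarith [sub_eq_zero.mp h]))
    exact sq_pos_of_ne_zero hne'
  have hρ1 : ρ < 1 := by linarith
  -- per-n lower bound
  have hbound : ∀ n : ℕ, 1 - ρ ^ n ≤ dTV (prodDist n p) (prodDist n q) := by
    intro n
    set P := prodDist n p with hP
    set Q := prodDist n q with hQ
    have hPp : IsPMF P := prodDist_pmf hp
    have hQp : IsPMF Q := prodDist_pmf hq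
    set A : Finset (Fin n → α) := Finset.univ.filter fun xs => Q xs < P xs with hA
    have key : ∑ xs ∈ A, P xs - ∑ xs ∈ A, Q xs = 1 - ∑ xs, min (P xs) (Q xs) := by
      have h1 : ∑ xs, (P xs - min (P xs) (Q xs)) = ∑ xs ∈ A, (P xs - Q xs) := by
        rw [← Finset.sum_filter_add_sum_filter_not Finset.univ
          (fun xs => Q xs < P xs) (fun xs => P xs - min (P xs) (Q xs))]
        have h2 : ∑ xs ∈ Finset.univ.filter (fun xs => ¬ Q xs < P xs),
            (P xs - min (P xs) (Q xs)) = 0 := by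
          apply Finset.sum_eq_zero
          intro xs hxs
          rw [Finset.mem_filter] at hxs
          rw [min_eq_left (le_of_not_gt hxs.2), sub_self]
        rw [h2, add_zero]
        apply Finset.sum_congr rfl
        intro xs hxs
        rw [Finset.mem_filter] at hxs
        rw [min_eq_right (le_of_lt hxs.2)]
      calc ∑ xs ∈ A, P xs - ∑ xs ∈ A, Q xs
          = ∑ xs ∈ A, (P xs - Q xs) := (Finset.sum_sub_distrib _ _).symm
        _ = ∑ xs, (P xs - min (P xs) (Q xs)) := h1.symm
        _ = 1 - ∑ xs, min (P xs) (Q xs) := by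
            rw [Finset.sum_sub_distrib, hPp.2]
    have hmin : ∑ xs : Fin n → α, min (P xs) (Q xs) ≤ ρ ^ n := by
      have hterm : ∀ xs : Fin n → α,
          min (P xs) (Q xs) ≤ ∏ i, Real.sqrt (p (xs i) * q (xs i)) := by
        intro xs
        have hm0 : 0 ≤ min (P xs) (Q xs) := le_min (hPp.1 xs) (hQp.1 xs)
        have hr0 : 0 ≤ ∏ i, Real.sqrt (p (xs i) * q (xs i)) :=
          Finset.prod_nonneg fun i _ => Real.sqrt_nonneg _
        have hsq2 : min (P xs) (Q xs) ^ 2 ≤ (∏ i, Real.sqrt (p (xs i) * q (xs i))) ^ 2 := by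
          have hrsq : (∏ i, Real.sqrt (p (xs i) * q (xs i))) ^ 2 = P xs * Q xs := by
            rw [← Finset.prod_pow]
            have : ∀ i : Fin n, Real.sqrt (p (xs i) * q (xs i)) ^ 2 = p (xs i) * q (xs i) :=
              fun i => Real.sq_sqrt (mul_nonneg (hp.1 _) (hq.1 _))
            rw [Finset.prod_congr rfl fun i _ => this i, hP, hQ]
            unfold prodDist
            rw [← Finset.prod_mul_distrib]
          rw [hrsq, sq]
          exact mul_le_mul (min_le_left _ _) (min_le_right _ _) hm0 (hPp.1 xs)
        exact (pow_le_pow_iff_left₀ hm0 hr0 (two_ne_zero)).mp hsq2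
      calc ∑ xs : Fin n → α, min (P xs) (Q xs)
          ≤ ∑ xs : Fin n → α, ∏ i, Real.sqrt (p (xs i) * q (xs i)) :=
            Finset.sum_le_sum fun xs _ => hterm xs
        _ = ρ ^ n := by rw [hρdef]; exact sum_prodDist n (fun x => Real.sqrt (p x * q x))
    have := le_dTV P Q A
    rw [key] at this
    linarith
  -- pass to the limsup
  have hbdd : Filter.IsBoundedUnder (· ≤ ·) Filter.atTop
      (fun n => dTV (prodDist n p) (prodDist n q)) :=
    Filter.isBoundedUnder_of ⟨1, fun n => dTV_le_one (prodDist_pmf hp) (prodDist_pmf hq)⟩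
  have hlim : ∀ ε > (0 : ℝ), 1 - ε ≤ limsupTV p q := by
    intro ε hε
    have hρn : Filter.Tendsto (fun n : ℕ => ρ ^ n) Filter.atTop (nhds 0) :=
      tendsto_pow_atTop_nhds_zero_of_lt_one hρ0 hρ1
    have hev : ∀ᶠ n : ℕ in Filter.atTop, 1 - ε ≤ dTV (prodDist n p) (prodDist n q) := by
      filter_upwards [hρn.eventually (gt_mem_nhds hε)] with n hn
      have := hbound n
      linarith
    exact Filter.le_limsup_of_frequently_le hev.frequently hbdd
  have : ∀ ε > (0 : ℝ), 1 ≤ limsupTV p q + ε := fun ε hε => by linarith [hlim ε hε]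
  exact le_of_forall_pos_le_add this

lemma limsupTV_nonneg {p q : α → ℝ} (hp : IsPMF p) (hq : IsPMF q) :
    0 ≤ limsupTV p q := by
  by_cases h : p = q
  · subst h; rw [limsupTV_self]
  · linarith [one_le_limsupTV hp hq h]

lemma eq_of_limsupTV_lt_one {p q : α → ℝ} (hp : IsPMF p) (hq : IsPMF q)
    (h : limsupTV p q < 1) : p = q := by
  by_contra hne
  linarith [one_le_limsupTV hp hq hne]

end Hellinger
section Gibbs

lemma gibbs {ι : Type*} [Fintype ι] (a m : ι → ℝ) (ha : ∀ i, 0 ≤ a i)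
    (hm : ∀ i, 0 ≤ m i) (hac : ∀ i, 0 < a i → 0 < m i)
    (hsum : ∑ i, m i ≤ ∑ i, a i) :
    0 ≤ ∑ i, a i * Real.log (a i / m i) := by
  have h : ∀ i, a i - m i ≤ a i * Real.log (a i / m i) := by
    intro i
    rcases eq_or_lt_of_le (ha i) with h0 | h0
    · rw [← h0]
      simp
      linarith [hm i]
    · have hmi := hac i h0
      have hd : 0 < m i / a i := div_pos hmi h0
      have hle := Real.log_le_sub_one_of_pos hd
      have hlog : Real.log (a i / m i) = - Real.log (m i / a i) := by
        rw [← Real.log_inv]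
        congr 1
        rw [inv_div]
      have h3 : a i * Real.log (m i / a i) ≤ a i * (m i / a i - 1) :=
        mul_le_mul_of_nonneg_left hle h0.le
      have h4 : a i * (m i / a i - 1) = m i - a i := by
        field_simp
      rw [hlog]
      linarith
  have := Finset.sum_le_sum (fun i (_ : i ∈ Finset.univ) => h i)
  rw [Finset.sum_sub_distrib] at this
  linarith

end Gibbs

section Continuity

lemma philem : ContinuousOn (fun p : ℝ × ℝ => p.1 * Real.log p.2)
    {p : ℝ × ℝ | 0 ≤ p.1 ∧ p.1 ≤ p.2 ∧ p.2 ≤ 1} := by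
  intro x hx
  obtain ⟨hu, huv, hv1⟩ := hx
  rcases lt_or_eq_of_le (le_trans hu huv) with hv0 | hv0
  · exact (continuousAt_fst.mul
      ((Real.continuousAt_log (ne_of_gt hv0)).comp continuousAt_snd)).continuousWithinAt
  · have hx2 : x.2 = 0 := hv0.symm
    have hx1 : x.1 = 0 := le_antisymm (hx2 ▸ huv) hu
    unfold ContinuousWithinAt
    have hval : (fun p : ℝ × ℝ => p.1 * Real.log p.2) x = 0 := by
      simp only []
      rw [hx1]; ring
    rw [hval]
    apply squeeze_zero_norm' (a := fun y : ℝ × ℝ => |y.2 * Real.log y.2|)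
    · filter_upwards [self_mem_nhdsWithin] with y hy
      obtain ⟨hy1, hy2, hy3⟩ := hy
      rcases eq_or_lt_of_le (le_trans hy1 hy2) with h0 | h0
      · have : y.1 = 0 := le_antisymm (h0 ▸ hy2) hy1
        simp [this, abs_nonneg]
        positivity
      · have hL : Real.log y.2 ≤ 0 := Real.log_nonpos h0.le hy3
        calc ‖y.1 * Real.log y.2‖ = y.1 * -Real.log y.2 := by
              rw [Real.norm_eq_abs, abs_mul, abs_of_nonneg hy1, abs_of_nonpos hL]
          _ ≤ y.2 * -Real.log y.2 :=
              mul_le_mul_of_nonneg_right hy2 (neg_nonneg.2 hL)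
          _ = |y.2 * Real.log y.2| := by
              rw [abs_mul, abs_of_nonneg (le_of_lt h0), abs_of_nonpos hL]
    · have hc : Filter.Tendsto (fun y : ℝ × ℝ => |y.2 * Real.log y.2|) (nhds x)
          (nhds (|x.2 * Real.log x.2|)) :=
        ((Real.continuous_mul_log.comp continuous_snd).abs).tendsto x
      rw [hx2] at hc
      simpa using hc.mono_left nhdsWithin_le_nhds

end Continuity
section CondMICont

variable {X Y Z : Type*} [Fintype X] [Fintype Y] [Fintype Z]

lemma pmf_sum3 {q : X × Y × Z → ℝ} (hq : IsPMF q) :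
    ∑ x, ∑ y, ∑ z, q (x, y, z) = 1 := by
  have h := hq.2
  rw [Fintype.sum_prod_type] at h
  simp_rw [Fintype.sum_prod_type] at h
  exact h

lemma sum3_comm (f : X × Y × Z → ℝ) :
    ∑ z, ∑ x, ∑ y, f (x, y, z) = ∑ x, ∑ y, ∑ z, f (x, y, z) := by
  rw [Finset.sum_comm]
  exact Finset.sum_congr rfl fun x _ => Finset.sum_comm

lemma margX3_pmf {q : X × Y × Z → ℝ} (hq : IsPMF q) : IsPMF (margX3 q) := by
  constructor
  · intro x
    exact Finset.sum_nonneg fun y _ => Finset.sum_nonneg fun z _ => hq.1 _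
  · exact pmf_sum3 hq

lemma margY3_pmf {q : X × Y × Z → ℝ} (hq : IsPMF q) : IsPMF (margY3 q) := by
  constructor
  · intro y
    exact Finset.sum_nonneg fun x _ => Finset.sum_nonneg fun z _ => hq.1 _
  · show ∑ y, ∑ x, ∑ z, q (x, y, z) = 1
    rw [Finset.sum_comm]
    exact pmf_sum3 hq

lemma pmf_le_sumY {q : X × Y × Z → ℝ} (hq : IsPMF q) (x : X) (y : Y) (z : Z) :
    q (x, y, z) ≤ ∑ y', q (x, y', z) :=
  Finset.single_le_sum (f := fun y' => q (x, y', z)) (fun i _ => hq.1 _)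
    (Finset.mem_univ y)

lemma pmf_le_sumX {q : X × Y × Z → ℝ} (hq : IsPMF q) (x : X) (y : Y) (z : Z) :
    q (x, y, z) ≤ ∑ x', q (x', y, z) :=
  Finset.single_le_sum (f := fun x' => q (x', y, z)) (fun i _ => hq.1 _)
    (Finset.mem_univ x)

lemma sumY_le_sumXY {q : X × Y × Z → ℝ} (hq : IsPMF q) (x : X) (z : Z) :
    ∑ y', q (x, y', z) ≤ ∑ x', ∑ y', q (x', y', z) :=
  Finset.single_le_sum (f := fun x' => ∑ y', q (x', y', z))
    (fun i _ => Finset.sum_nonneg fun y' _ => hq.1 _) (Finset.mem_univ x)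

lemma sumX_le_sumXY {q : X × Y × Z → ℝ} (hq : IsPMF q) (y : Y) (z : Z) :
    ∑ x', q (x', y, z) ≤ ∑ x', ∑ y', q (x', y', z) :=
  Finset.sum_le_sum fun x' _ => pmf_le_sumY hq x' y z

lemma sumXY_le_one {q : X × Y × Z → ℝ} (hq : IsPMF q) (z : Z) :
    ∑ x', ∑ y', q (x', y', z) ≤ 1 := by
  have htot : ∑ z', ∑ x', ∑ y', q (x', y', z') = 1 := by
    rw [sum3_comm]
    exact pmf_sum3 hq
  rw [← htot]
  exact Finset.single_le_sum (f := fun z' => ∑ x', ∑ y', q (x', y', z'))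
    (fun i _ => Finset.sum_nonneg fun x' _ => Finset.sum_nonneg fun y' _ => hq.1 _)
    (Finset.mem_univ z)

lemma condMI_continuousOn :
    ContinuousOn (fun q : X × Y × Z → ℝ => condMI q) {q : X × Y × Z → ℝ | IsPMF q} := by
  classical
  have hphi : ∀ (u v : (X × Y × Z → ℝ) → ℝ), Continuous u → Continuous v →
      (∀ q : X × Y × Z → ℝ, IsPMF q → 0 ≤ u q ∧ u q ≤ v q ∧ v q ≤ 1) →
      ContinuousOn (fun q => u q * Real.log (v q)) {q : X × Y × Z → ℝ | IsPMF q} := by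
    intro u v hu hv h
    have := philem.comp (f := fun q => (u q, v q)) ((hu.prodMk hv).continuousOn)
      (fun q hq => h q hq)
    exact this
  set G : (X × Y × Z → ℝ) → ℝ := fun q => ∑ x, ∑ y, ∑ z,
    (q (x, y, z) * Real.log (q (x, y, z))
      + q (x, y, z) * Real.log (∑ x', ∑ y', q (x', y', z))
      - q (x, y, z) * Real.log (∑ y', q (x, y', z))
      - q (x, y, z) * Real.log (∑ x', q (x', y, z))) with hG
  have hGcont : ContinuousOn G {q : X × Y × Z → ℝ | IsPMF q} := by
    apply continuousOn_finset_sum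
    intro x _
    apply continuousOn_finset_sum
    intro y _
    apply continuousOn_finset_sum
    intro z _
    have cP : Continuous fun q : X × Y × Z → ℝ => q (x, y, z) := continuous_apply _
    have cA : Continuous fun q : X × Y × Z → ℝ => ∑ x', ∑ y', q (x', y', z) :=
      continuous_finset_sum _ fun x' _ => continuous_finset_sum _ fun y' _ =>
        continuous_apply _
    have cB : Continuous fun q : X × Y × Z → ℝ => ∑ y', q (x, y', z) :=
      continuous_finset_sum _ fun y' _ => continuous_apply _
    have cC : Continuous fun q : X × Y × Z → ℝ => ∑ x', q (x', y, z) :=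
      continuous_finset_sum _ fun x' _ => continuous_apply _
    have h1 := hphi _ _ cP cP (fun q hq => ⟨hq.1 _, le_refl _,
      le_trans (pmf_le_sumY hq x y z) (le_trans (sumY_le_sumXY hq x z) (sumXY_le_one hq z))⟩)
    have h2 := hphi _ _ cP cA (fun q hq => ⟨hq.1 _,
      le_trans (pmf_le_sumY hq x y z) (sumY_le_sumXY hq x z), sumXY_le_one hq z⟩)
    have h3 := hphi _ _ cP cB (fun q hq => ⟨hq.1 _, pmf_le_sumY hq x y z,
      le_trans (sumY_le_sumXY hq x z) (sumXY_le_one hq z)⟩)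
    have h4 := hphi _ _ cP cC (fun q hq => ⟨hq.1 _, pmf_le_sumX hq x y z,
      le_trans (sumX_le_sumXY hq y z) (sumXY_le_one hq z)⟩)
    exact ((h1.add h2).sub h3).sub h4
  apply hGcont.congr
  intro q hq
  have hq' : IsPMF q := hq
  show condMI q = G q
  unfold condMI
  rw [hG]
  apply Finset.sum_congr rfl
  intro x _
  apply Finset.sum_congr rfl
  intro y _
  apply Finset.sum_congr rfl
  intro z _
  rcases eq_or_lt_of_le (hq'.1 (x, y, z)) with h0 | h0
  · rw [← h0]
    simp
  · have hB : 0 < ∑ y', q (x, y', z) := lt_of_lt_of_le h0 (pmf_le_sumY hq' x y z)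
    have hC : 0 < ∑ x', q (x', y, z) := lt_of_lt_of_le h0 (pmf_le_sumX hq' x y z)
    have hA : 0 < ∑ x', ∑ y', q (x', y', z) := lt_of_lt_of_le hB (sumY_le_sumXY hq' x z)
    rw [Real.log_div (by positivity) (by positivity),
      Real.log_mul (ne_of_gt h0) (ne_of_gt hA), Real.log_mul (ne_of_gt hB) (ne_of_gt hC)]
    ring

end CondMICont
section Attain

variable {X Z : Type*} [Fintype X] [Fintype Z]

lemma exists_min_condMI (pXZ : X × Z → ℝ) (D : X → X → ℝ) (Δ : ℝ)
    (q0 : X × X × Z → ℝ) (hq0 : IsPMF q0) (hm0 : margXZ3 q0 = pXZ)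
    (hd0 : expD3 q0 D ≤ Δ) :
    ∃ q : X × X × Z → ℝ, (IsPMF q ∧ margXZ3 q = pXZ ∧ expD3 q D ≤ Δ) ∧
      ∀ q' : X × X × Z → ℝ, IsPMF q' → margXZ3 q' = pXZ → expD3 q' D ≤ Δ →
        condMI q ≤ condMI q' := by
  classical
  set F : Set (X × X × Z → ℝ) := {q | IsPMF q ∧ margXZ3 q = pXZ ∧ expD3 q D ≤ Δ} with hF
  have hFeq : F = ((⋂ w, {q : X × X × Z → ℝ | 0 ≤ q w}) ∩
      {q : X × X × Z → ℝ | ∑ w, q w = 1}) ∩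
      ((⋂ s : X × Z, {q : X × X × Z → ℝ | (∑ y, q (s.1, y, s.2)) = pXZ s}) ∩
      {q : X × X × Z → ℝ | expD3 q D ≤ Δ}) := by
    ext q
    simp only [hF, Set.mem_setOf_eq, Set.mem_inter_iff, Set.mem_iInter, IsPMF, funext_iff,
      margXZ3]
    try tauto
  have hclosed : IsClosed F := by
    rw [hFeq]
    apply IsClosed.inter
    · apply IsClosed.inter
      · exact isClosed_iInter fun w => isClosed_le continuous_const (continuous_apply w)
      · exact isClosed_eq (continuous_finset_sum _ fun w _ => continuous_apply w)
          continuous_const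
    · apply IsClosed.inter
      · exact isClosed_iInter fun s => isClosed_eq
          (continuous_finset_sum _ fun y _ => continuous_apply _) continuous_const
      · apply isClosed_le _ continuous_const
        unfold expD3
        exact continuous_finset_sum _ fun x _ => continuous_finset_sum _ fun y _ =>
          continuous_finset_sum _ fun z _ => (continuous_apply _).mul continuous_const
  have hsub : F ⊆ Set.Icc (0 : X × X × Z → ℝ) 1 := by
    intro q hq
    constructor
    · intro w
      exact hq.1.1 w
    · intro w
      calc q w ≤ ∑ w', q w' :=
            Finset.single_le_sum (fun w' _ => hq.1.1 w') (Finset.mem_univ w)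
        _ = 1 := hq.1.2
  have hFc : IsCompact F := IsCompact.of_isClosed_subset isCompact_Icc hclosed hsub
  have hFne : F.Nonempty := ⟨q0, hq0, hm0, hd0⟩
  have hcont : ContinuousOn (fun q : X × X × Z → ℝ => condMI q) F :=
    condMI_continuousOn.mono fun q hq => hq.1
  obtain ⟨q, hqF, hmin⟩ := hFc.exists_isMinOn hFne hcont
  exact ⟨q, hqF, fun q' h1 h2 h3 => hmin (show q' ∈ F from ⟨h1, h2, h3⟩)⟩

end Attain
section DPI

lemma rot {A B C : Type*} [Fintype A] [Fintype B] [Fintype C] (f : A → B → C → ℝ) :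
    ∑ a, ∑ b, ∑ c, f a b c = ∑ c, ∑ a, ∑ b, f a b c := by
  calc ∑ a, ∑ b, ∑ c, f a b c = ∑ a, ∑ c, ∑ b, f a b c :=
        Finset.sum_congr rfl fun a _ => Finset.sum_comm
    _ = ∑ c, ∑ a, ∑ b, f a b c := Finset.sum_comm

lemma rot2 {A B C : Type*} [Fintype A] [Fintype B] [Fintype C] (f : A → B → C → ℝ) :
    ∑ a, ∑ b, ∑ c, f a b c = ∑ b, ∑ c, ∑ a, f a b c :=
  (rot f).trans (rot fun c a b => f a b c)

variable {X Y U Z : Type*} [Fintype X] [Fintype Y] [Fintype U] [Fintype Z]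

lemma dpi (q : X × Y × U × Z → ℝ) (hq : IsPMF q)
    (hCI : ∀ x y u z, (∑ x', ∑ y', q (x', y', u, z)) * q (x, y, u, z) =
      (∑ y', q (x, y', u, z)) * (∑ x', q (x', y, u, z))) :
    condMI (fun p : X × Y × Z => ∑ u, q (p.1, p.2.1, u, p.2.2)) ≤
      condMI (fun p : X × U × Z => ∑ y, q (p.1, y, p.2.1, p.2.2)) := by
  classical
  have hnn : ∀ w, 0 ≤ q w := hq.1
  -- the three integrand families
  set R4 : X → Y → U → Z → ℝ := fun x y u z => q (x, y, u, z) *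
    Real.log ((∑ u', q (x, y, u', z)) * (∑ x', ∑ y', ∑ u', q (x', y', u', z)) /
      ((∑ y', ∑ u', q (x, y', u', z)) * (∑ x', ∑ u', q (x', y, u', z)))) with hR4
  set R2 : X → Y → U → Z → ℝ := fun x y u z => q (x, y, u, z) *
    Real.log ((∑ y', q (x, y', u, z)) * (∑ x', ∑ u', ∑ y', q (x', y', u', z)) /
      ((∑ u', ∑ y', q (x, y', u', z)) * (∑ x', ∑ y', q (x', y', u, z)))) with hR2
  set R5 : X → Y → U → Z → ℝ := fun x y u z => q (x, y, u, z) *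
    Real.log (q (x, y, u, z) * (∑ x', ∑ u', q (x', y, u', z)) /
      ((∑ u', q (x, y, u', z)) * (∑ x', q (x', y, u, z)))) with hR5
  -- identification of the two sides
  have hA4 : condMI (fun p : X × Y × Z => ∑ u, q (p.1, p.2.1, u, p.2.2)) =
      ∑ x, ∑ y, ∑ z, ∑ u, R4 x y u z := by
    unfold condMI
    refine Finset.sum_congr rfl fun x _ => Finset.sum_congr rfl fun y _ =>
      Finset.sum_congr rfl fun z _ => ?_
    simp only [hR4]
    rw [Finset.sum_mul]
  have hA2 : condMI (fun p : X × U × Z => ∑ y, q (p.1, y, p.2.1, p.2.2)) =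
      ∑ x, ∑ u, ∑ z, ∑ y, R2 x y u z := by
    unfold condMI
    refine Finset.sum_congr rfl fun x _ => Finset.sum_congr rfl fun u _ =>
      Finset.sum_congr rfl fun z _ => ?_
    simp only [hR2]
    rw [Finset.sum_mul]
  -- reorder both to the canonical order (y, z, x, u)
  have hro4 : ∑ x, ∑ y, ∑ z, ∑ u, R4 x y u z = ∑ y, ∑ z, ∑ x, ∑ u, R4 x y u z :=
    rot2 fun x y z => ∑ u, R4 x y u z
  have hro2 : ∑ x, ∑ u, ∑ z, ∑ y, R2 x y u z = ∑ y, ∑ z, ∑ x, ∑ u, R2 x y u z := by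
    calc ∑ x, ∑ u, ∑ z, ∑ y, R2 x y u z
        = ∑ x, ∑ y, ∑ u, ∑ z, R2 x y u z :=
          Finset.sum_congr rfl fun x _ => rot fun u z y => R2 x y u z
      _ = ∑ x, ∑ y, ∑ z, ∑ u, R2 x y u z :=
          Finset.sum_congr rfl fun x _ => Finset.sum_congr rfl fun y _ => Finset.sum_comm
      _ = ∑ y, ∑ z, ∑ x, ∑ u, R2 x y u z := rot2 fun x y z => ∑ u, R2 x y u z
  -- termwise chain rule
  have hterm : ∀ x y u z, R2 x y u z - R4 x y u z = R5 x y u z := by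
    intro x y u z
    rcases eq_or_lt_of_le (hnn (x, y, u, z)) with h0 | h0
    · simp only [hR2, hR4, hR5, ← h0]
      ring
    · have ha : 0 < ∑ u', q (x, y, u', z) :=
        lt_of_lt_of_le h0 (Finset.single_le_sum (f := fun u' => q (x, y, u', z))
          (fun i _ => hnn _) (Finset.mem_univ u))
      have hb : 0 < ∑ y', q (x, y', u, z) :=
        lt_of_lt_of_le h0 (Finset.single_le_sum (f := fun y' => q (x, y', u, z))
          (fun i _ => hnn _) (Finset.mem_univ y))
      have hW : 0 < ∑ x', q (x', y, u, z) :=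
        lt_of_lt_of_le h0 (Finset.single_le_sum (f := fun x' => q (x', y, u, z))
          (fun i _ => hnn _) (Finset.mem_univ x))
      have hS : 0 < ∑ x', ∑ y', q (x', y', u, z) :=
        lt_of_lt_of_le hb (Finset.single_le_sum (f := fun x' => ∑ y', q (x', y', u, z))
          (fun i _ => Finset.sum_nonneg fun _ _ => hnn _) (Finset.mem_univ x))
      have hP4 : 0 < ∑ y', ∑ u', q (x, y', u', z) :=
        lt_of_lt_of_le ha (Finset.single_le_sum (f := fun y' => ∑ u', q (x, y', u', z))
          (fun i _ => Finset.sum_nonneg fun _ _ => hnn _) (Finset.mem_univ y))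
      have hQ4 : 0 < ∑ x', ∑ u', q (x', y, u', z) :=
        lt_of_lt_of_le ha (Finset.single_le_sum (f := fun x' => ∑ u', q (x', y, u', z))
          (fun i _ => Finset.sum_nonneg fun _ _ => hnn _) (Finset.mem_univ x))
      have hT4 : 0 < ∑ x', ∑ y', ∑ u', q (x', y', u', z) :=
        lt_of_lt_of_le hP4 (Finset.single_le_sum
          (f := fun x' => ∑ y', ∑ u', q (x', y', u', z))
          (fun i _ => Finset.sum_nonneg fun _ _ => Finset.sum_nonneg fun _ _ => hnn _)
          (Finset.mem_univ x))
      have hP24 : ∑ u', ∑ y', q (x, y', u', z) = ∑ y', ∑ u', q (x, y', u', z) :=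
        Finset.sum_comm
      have hT24 : ∑ x', ∑ u', ∑ y', q (x', y', u', z)
          = ∑ x', ∑ y', ∑ u', q (x', y', u', z) :=
        Finset.sum_congr rfl fun x' _ => Finset.sum_comm
      have hci := hCI x y u z
      simp only [hR2, hR4, hR5]
      rw [hT24, hP24]
      have h1 : ((∑ y', q (x, y', u, z)) * (∑ x', ∑ y', ∑ u', q (x', y', u', z)) /
            ((∑ y', ∑ u', q (x, y', u', z)) * (∑ x', ∑ y', q (x', y', u, z)))) /
          ((∑ u', q (x, y, u', z)) * (∑ x', ∑ y', ∑ u', q (x', y', u', z)) /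
            ((∑ y', ∑ u', q (x, y', u', z)) * (∑ x', ∑ u', q (x', y, u', z))))
          = ((∑ y', q (x, y', u, z)) * (∑ x', ∑ u', q (x', y, u', z))) /
            ((∑ x', ∑ y', q (x', y', u, z)) * (∑ u', q (x, y, u', z))) := by
        field_simp
      have h2 : q (x, y, u, z) * (∑ x', ∑ u', q (x', y, u', z)) /
            ((∑ u', q (x, y, u', z)) * (∑ x', q (x', y, u, z)))
          = ((∑ y', q (x, y', u, z)) * (∑ x', ∑ u', q (x', y, u', z))) /
            ((∑ x', ∑ y', q (x', y', u, z)) * (∑ u', q (x, y, u', z))) := by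
        rw [div_eq_div_iff (ne_of_gt (mul_pos ha hW)) (ne_of_gt (mul_pos hS ha))]
        linear_combination (∑ x', ∑ u', q (x', y, u', z)) * (∑ u', q (x, y, u', z)) * hci
      have hlog := Real.log_div
        (ne_of_gt (div_pos (mul_pos hb hT4) (mul_pos hP4 hS)))
        (ne_of_gt (div_pos (mul_pos ha hT4) (mul_pos hP4 hQ4)))
      rw [h2, ← h1, hlog, mul_sub]
  -- nonnegativity of the conditional mutual information term
  have hpos : 0 ≤ ∑ y, ∑ z, ∑ x, ∑ u, R5 x y u z := by
    apply Finset.sum_nonneg; intro y _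
    apply Finset.sum_nonneg; intro z _
    have hg := gibbs (ι := X × U) (fun w => q (w.1, y, w.2, z))
      (fun w => (∑ u', q (w.1, y, u', z)) * (∑ x', q (x', y, w.2, z)) /
        (∑ x', ∑ u', q (x', y, u', z)))
      (fun w => hnn _)
      (fun w => div_nonneg (mul_nonneg (Finset.sum_nonneg fun _ _ => hnn _)
        (Finset.sum_nonneg fun _ _ => hnn _))
        (Finset.sum_nonneg fun _ _ => Finset.sum_nonneg fun _ _ => hnn _))
      ?hac ?hsum
    case hac =>
      intro w hw
      have hA : 0 < ∑ u', q (w.1, y, u', z) :=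
        lt_of_lt_of_le hw (Finset.single_le_sum (f := fun u' => q (w.1, y, u', z))
          (fun i _ => hnn _) (Finset.mem_univ w.2))
      have hWp : 0 < ∑ x', q (x', y, w.2, z) :=
        lt_of_lt_of_le hw (Finset.single_le_sum (f := fun x' => q (x', y, w.2, z))
          (fun i _ => hnn _) (Finset.mem_univ w.1))
      have hQ : 0 < ∑ x', ∑ u', q (x', y, u', z) :=
        lt_of_lt_of_le hA (Finset.single_le_sum (f := fun x' => ∑ u', q (x', y, u', z))
          (fun i _ => Finset.sum_nonneg fun _ _ => hnn _) (Finset.mem_univ w.1))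
      exact div_pos (mul_pos hA hWp) hQ
    case hsum =>
      have hsa : ∑ w : X × U, q (w.1, y, w.2, z) = ∑ x', ∑ u', q (x', y, u', z) :=
        Fintype.sum_prod_type _
      have hsw : ∑ u', ∑ x', q (x', y, u', z) = ∑ x', ∑ u', q (x', y, u', z) :=
        Finset.sum_comm
      have hsm : ∑ w : X × U, (∑ u', q (w.1, y, u', z)) * (∑ x', q (x', y, w.2, z)) /
            (∑ x', ∑ u', q (x', y, u', z))
          = (∑ x', ∑ u', q (x', y, u', z)) *
            ((∑ x', ∑ u', q (x', y, u', z)) / (∑ x', ∑ u', q (x', y, u', z))) := by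
        rw [Fintype.sum_prod_type]
        simp_rw [mul_div_assoc, ← Finset.mul_sum, ← Finset.sum_div]
        rw [← Finset.sum_mul, hsw]
      rw [hsa, hsm]
      rcases eq_or_lt_of_le (Finset.sum_nonneg (fun x' (_ : x' ∈ Finset.univ) =>
          Finset.sum_nonneg fun u' _ => hnn (x', y, u', z))) with hQ0 | hQ0
      · rw [← hQ0]
        simp
      · rw [div_self (ne_of_gt hQ0), mul_one]
    -- now transfer the gibbs sum to the iterated sum of R5
    have htrans : ∑ w : X × U, q (w.1, y, w.2, z) *
        Real.log (q (w.1, y, w.2, z) /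
          ((∑ u', q (w.1, y, u', z)) * (∑ x', q (x', y, w.2, z)) /
            (∑ x', ∑ u', q (x', y, u', z))))
        = ∑ x, ∑ u, R5 x y u z := by
      rw [Fintype.sum_prod_type]
      refine Finset.sum_congr rfl fun x _ => Finset.sum_congr rfl fun u _ => ?_
      simp only [hR5]
      rw [div_div_eq_mul_div]
    rw [← htrans]
    exact hg
  -- put everything together
  have hsub : ∑ y, ∑ z, ∑ x, ∑ u, R2 x y u z - ∑ y, ∑ z, ∑ x, ∑ u, R4 x y u z
      = ∑ y, ∑ z, ∑ x, ∑ u, R5 x y u z := by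
    rw [← Finset.sum_sub_distrib]
    refine Finset.sum_congr rfl fun y _ => ?_
    rw [← Finset.sum_sub_distrib]
    refine Finset.sum_congr rfl fun z _ => ?_
    rw [← Finset.sum_sub_distrib]
    refine Finset.sum_congr rfl fun x _ => ?_
    rw [← Finset.sum_sub_distrib]
    exact Finset.sum_congr rfl fun u _ => hterm x y u z
  rw [hA4, hA2, hro4, hro2]
  linarith [hpos, hsub]

end DPI
section Main4

variable {X Y U Z : Type*} [Fintype X] [Fintype Y] [Fintype U] [Fintype Z]

lemma pmf_sum4 {q : X × Y × U × Z → ℝ} (hq : IsPMF q) :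
    ∑ x, ∑ y, ∑ u, ∑ z, q (x, y, u, z) = 1 := by
  have h := hq.2
  rw [Fintype.sum_prod_type] at h
  simp_rw [Fintype.sum_prod_type] at h
  exact h

end Main4

/-- **Lemma 1:** the strong-perception rate region is contained in the
empirical-perception rate region, `R^{(s)} ⊆ R^{(e)}`. -/
theorem strong_region_subset_empirical_region
    {X Z : Type} [Fintype X] [Fintype Z]
    (pXZ : X × Z → ℝ) (hpXZ : IsPMF pXZ)
    (D : X → X → ℝ) (dmax : ℝ) (hD : ∀ x y, 0 ≤ D x y ∧ D x y ≤ dmax) :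
    (⋃ γ > (0 : ℝ), RegionSminus pXZ D γ ∪ RegionSplus pXZ D γ) ⊆
      ⋃ γ > (0 : ℝ), RegionE pXZ D γ := by
  intro t ht
  obtain ⟨γ, hγ, hts⟩ := Set.mem_iUnion₂.mp ht
  apply Set.mem_iUnion₂.mpr
  rcases hts with hminus | hplus
  · -- strong minus region
    obtain ⟨U, instU, q, hw⟩ := hminus
    obtain ⟨hqpmf, hmarg, hCI, hPif, hR0, hrate, hrate2, hdist, hTV⟩ := hw
    set q' : X × X × Z → ℝ := fun w => ∑ u, q (w.1, w.2.1, u, w.2.2) with hq'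
    have hq'pmf : IsPMF q' := by
      constructor
      · intro w
        exact Finset.sum_nonneg fun u _ => hqpmf.1 _
      · have h1 : ∑ w : X × X × Z, q' w = ∑ x, ∑ y, ∑ z, ∑ u, q (x, y, u, z) := by
          rw [Fintype.sum_prod_type]
          simp_rw [Fintype.sum_prod_type]
          rfl
        rw [h1]
        rw [show (∑ x, ∑ y, ∑ z, ∑ u, q (x, y, u, z))
            = ∑ x, ∑ y, ∑ u, ∑ z, q (x, y, u, z) from
          Finset.sum_congr rfl fun x _ => Finset.sum_congr rfl fun y _ => Finset.sum_comm]
        exact pmf_sum4 hqpmf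
    have hmarg' : margXZ3 q' = pXZ := by
      funext s
      exact hmarg s.1 s.2
    have hrate' : condMI q' + γ ≤ t.1 := by
      have hdpi := dpi q hqpmf hCI
      have := hrate
      linarith
    have hdist' : expD3 q' D ≤ t.2.2.1 := by
      have h1 : expD3 q' D = ∑ x, ∑ y, ∑ u, ∑ z, q (x, y, u, z) * D x y := by
        unfold expD3
        refine Finset.sum_congr rfl fun x _ => Finset.sum_congr rfl fun y _ => ?_
        rw [show (∑ z, q' (x, y, z) * D x y) = ∑ z, ∑ u, q (x, y, u, z) * D x y from
          Finset.sum_congr rfl fun z _ => Finset.sum_mul _ _ _]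
        exact Finset.sum_comm
      rw [h1]
      exact hdist
    have hX : margX3 q' = fun x => ∑ y, ∑ u, ∑ z, q (x, y, u, z) := by
      funext x
      exact Finset.sum_congr rfl fun y _ => Finset.sum_comm
    have hY : margY3 q' = fun y => ∑ x, ∑ u, ∑ z, q (x, y, u, z) := by
      funext y
      exact Finset.sum_congr rfl fun x _ => Finset.sum_comm
    have hTV2 : limsupTV (margX3 q') (margY3 q') ≤ t.2.2.2 := by
      rw [hX, hY]
      exact hTV
    have hTV' : dTV (margX3 q') (margY3 q') ≤ t.2.2.2 := by
      by_cases heq : margX3 q' = margY3 q'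
      · rw [heq, dTV_self]
        rw [heq, limsupTV_self] at hTV2
        exact hTV2
      · have h1 : (1 : ℝ) ≤ limsupTV (margX3 q') (margY3 q') :=
          one_le_limsupTV (margX3_pmf hq'pmf) (margY3_pmf hq'pmf) heq
        have h2 : dTV (margX3 q') (margY3 q') ≤ 1 :=
          dTV_le_one (margX3_pmf hq'pmf) (margY3_pmf hq'pmf)
        linarith
    exact ⟨γ, hγ, q', hq'pmf, hmarg', hR0.le, hrate', hdist', hTV'⟩
  · -- strong plus region
    obtain ⟨q0, hq0pmf, hmarg0, hfPi, hR0, hrate0, hdist0⟩ := hplus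
    by_cases hPi : 1 ≤ t.2.2.2
    · refine ⟨γ, hγ, q0, hq0pmf, hmarg0, hR0, hrate0, hdist0, ?_⟩
      exact le_trans (dTV_le_one (margX3_pmf hq0pmf) (margY3_pmf hq0pmf)) hPi
    · push_neg at hPi
      obtain ⟨qm, ⟨hm1, hm2, hm3⟩, hmin⟩ :=
        exists_min_condMI pXZ D t.2.2.1 q0 hq0pmf hmarg0 hdist0
      have hlb : ∀ r ∈ {r | ∃ q : X × X × Z → ℝ,
          IsPMF q ∧ margXZ3 q = pXZ ∧ expD3 q D ≤ t.2.2.1 ∧ r = condMI q},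
          condMI qm ≤ r := by
        rintro r ⟨q', h1, h2, h3, rfl⟩
        exact hmin q' h1 h2 h3
      have hbdd : BddBelow {r | ∃ q : X × X × Z → ℝ,
          IsPMF q ∧ margXZ3 q = pXZ ∧ expD3 q D ≤ t.2.2.1 ∧ r = condMI q} :=
        ⟨condMI qm, hlb⟩
      have hRd_le : Rdist pXZ D t.2.2.1 ≤ condMI q0 := by
        apply csInf_le hbdd
        exact ⟨q0, hq0pmf, hmarg0, hdist0, rfl⟩
      have hne2 : {r | ∃ q : X × X × Z → ℝ,
          IsPMF q ∧ margXZ3 q = pXZ ∧ expD3 q D ≤ t.2.2.1 ∧ r = condMI q}.Nonempty :=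
        ⟨condMI qm, qm, hm1, hm2, hm3, rfl⟩
      have hqm_le : condMI qm ≤ Rdist pXZ D t.2.2.1 := le_csInf hne2 hlb
      -- the defining set of gFun at (R(Δ), Δ)
      set S : Set ℝ := {v | ∃ q : X × X × Z → ℝ,
        IsPMF q ∧ margXZ3 q = pXZ ∧ condMI q ≤ Rdist pXZ D t.2.2.1 ∧
          expD3 q D ≤ t.2.2.1 ∧ v = limsupTV (margX3 q) (margY3 q)} with hS
      have hSne : S.Nonempty :=
        ⟨limsupTV (margX3 qm) (margY3 qm), qm, hm1, hm2, hqm_le, hm3, rfl⟩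
      have hSlb : ∀ v ∈ S, (0 : ℝ) ≤ v := by
        rintro v ⟨q', h1, _, _, _, rfl⟩
        exact limsupTV_nonneg (margX3_pmf h1) (margY3_pmf h1)
      have hfS : fFun pXZ D t.2.2.1 = sInf S := by
        unfold fFun gFun
        rfl
      have hPi0 : (0 : ℝ) ≤ t.2.2.2 := by
        have := le_csInf hSne hSlb
        rw [hfS] at hfPi
        linarith
      have hex : ∃ v ∈ S, v < 1 := by
        by_contra h
        push_neg at h
        have := le_csInf hSne h
        rw [hfS] at hfPi
        linarith
      obtain ⟨v, hvS, hv1⟩ := hex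
      obtain ⟨q1, h11, h12, h13, h14, hveq⟩ := hvS
      have heq : margX3 q1 = margY3 q1 := by
        apply eq_of_limsupTV_lt_one (margX3_pmf h11) (margY3_pmf h11)
        rw [← hveq]
        exact hv1
      refine ⟨γ, hγ, q1, h11, h12, hR0, ?_, h14, ?_⟩
      · linarith
      · rw [heq, dTV_self]
        exact hPi0

end
end

section
/- Let (X^n, Z^n) be i.i.d. pairs with values in finite alphabets, let K be a finite-valued random variable independent of (X^n, Z^n), let M = f_n(X^n, Z^n, K) for a (possibly stochastic) function f_n, and let T be uniformly distributed on {1,…,n} and independent of everything else. Then H(M) ≥ n · I(X_T ; (M,K,T) | Z_T), where H denotes Shannon entropy and I(·;·|·) conditional mutual information. -/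
open scoped BigOperators
open Finset Filter

noncomputable section

section Helpers
set_option linter.unusedSectionVars false
variable {Ω α β γ δ : Type*} [Fintype Ω] [Fintype α] [DecidableEq α] [DecidableEq β]
  (μ : Ω → ℝ)

lemma my_law_nonneg (hμ : ∀ ω, 0 ≤ μ ω) (f : Ω → α) (a : α) : 0 ≤ law μ f a := by
  apply Finset.sum_nonneg; intro ω _; split <;> simp [hμ ω]

lemma my_law_apply_le (hμ : ∀ ω, 0 ≤ μ ω) (f : Ω → α) (ω : Ω) : μ ω ≤ law μ f (f ω) := by
  unfold law
  have := Finset.single_le_sum (f := fun ω' => if f ω' = f ω then μ ω' else 0)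
    (fun ω' _ => by split <;> simp [hμ ω']) (Finset.mem_univ ω)
  simpa using this

lemma my_sum_law_mul (f : Ω → α) (F : α → ℝ) :
    ∑ a, law μ f a * F a = ∑ ω, μ ω * F (f ω) := by
  unfold law
  simp only [Finset.sum_mul]
  rw [Finset.sum_comm]
  apply Finset.sum_congr rfl; intro ω _
  simp only [ite_mul, zero_mul]
  rw [Finset.sum_ite_eq univ (f ω) (fun a => μ ω * F a)]
  simp

lemma my_sum_law (f : Ω → α) (hμ : ∑ ω, μ ω = 1) : ∑ a, law μ f a = 1 := by
  have := my_sum_law_mul μ f (fun _ => (1:ℝ))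
  simpa [hμ] using this

lemma my_law_comp (f : Ω → α) (g : α → β) (b : β) :
    law μ (fun ω => g (f ω)) b = ∑ a, if g a = b then law μ f a else 0 := by
  calc law μ (fun ω => g (f ω)) b
      = ∑ ω, μ ω * (if g (f ω) = b then 1 else 0) := by
        unfold law; apply Finset.sum_congr rfl; intros; dsimp only; split <;> simp
    _ = ∑ a, law μ f a * (if g a = b then 1 else 0) :=
        (my_sum_law_mul μ f (fun a => if g a = b then (1:ℝ) else 0)).symm
    _ = ∑ a, if g a = b then law μ f a else 0 := by
        apply Finset.sum_congr rfl; intros; split <;> simp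

lemma my_law_marg [Fintype β] [Fintype γ] [DecidableEq γ] [DecidableEq δ]
    (A : Ω → α) (B : Ω → β) (C : Ω → γ) (D : Ω → δ) (x : α) (z : δ) :
    ∑ m : β, ∑ k : γ, law μ (fun ω => (A ω, B ω, C ω, D ω)) (x, m, k, z)
      = law μ (fun ω => (A ω, D ω)) (x, z) := by
  unfold law
  have step : ∀ m : β, (∑ k : γ, ∑ ω, if (A ω, B ω, C ω, D ω) = (x, m, k, z) then μ ω else 0)
      = ∑ ω, ∑ k : γ, if (A ω, B ω, C ω, D ω) = (x, m, k, z) then μ ω else 0 :=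
    fun m => Finset.sum_comm
  simp only [step]
  rw [Finset.sum_comm]
  apply Finset.sum_congr rfl; intro ω _
  by_cases hA : A ω = x <;> by_cases hD : D ω = z <;>
    simp [hA, hD, Prod.mk.injEq, ite_and, Finset.sum_ite_eq]

end Helpers

section Helpers2
variable {ι A B : Type*} [Fintype ι] [DecidableEq ι] [Fintype A] [Fintype B]
  [DecidableEq A] [DecidableEq B]
set_option linter.unusedSectionVars false

lemma my_sum_sum_prod' (G : ι → A → B → ℝ) :
    ∑ xs : ι → A, ∑ zs : ι → B, ∏ i, G i (xs i) (zs i)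
      = ∏ i, ∑ a, ∑ b, G i a b := by
  have h1 : ∀ xs : ι → A, ∑ zs : ι → B, ∏ i, G i (xs i) (zs i)
      = ∏ i, ∑ b, G i (xs i) b := fun xs => (Fintype.prod_sum (fun i b => G i (xs i) b)).symm
  simp only [h1]
  exact (Fintype.prod_sum (fun i a => ∑ b, G i a b)).symm

lemma my_sum_sum_prod (ρ : A → B → ℝ) :
    ∑ xs : ι → A, ∑ zs : ι → B, ∏ i, ρ (xs i) (zs i)
      = (∑ a, ∑ b, ρ a b) ^ (Fintype.card ι) := by
  rw [my_sum_sum_prod' (fun _ a b => ρ a b), Finset.prod_const, Finset.card_univ]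

lemma my_sum_sum_prod_ite (ρ : A → B → ℝ) (t : ι) (x : A) (z : B) :
    ∑ xs : ι → A, ∑ zs : ι → B, (if xs t = x ∧ zs t = z then ∏ i, ρ (xs i) (zs i) else 0)
      = ρ x z * (∑ a, ∑ b, ρ a b) ^ (Fintype.card ι - 1) := by
  set G : ι → A → B → ℝ :=
    fun i a b => if i = t then (if a = x ∧ b = z then ρ a b else 0) else ρ a b with hG
  have key : ∀ (xs : ι → A) (zs : ι → B),
      (if xs t = x ∧ zs t = z then ∏ i, ρ (xs i) (zs i) else 0) = ∏ i, G i (xs i) (zs i) := by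
    intro xs zs
    have hre : ∏ i, G i (xs i) (zs i)
        = G t (xs t) (zs t) * ∏ i ∈ univ.erase t, G i (xs i) (zs i) :=
      (Finset.mul_prod_erase univ _ (mem_univ t)).symm
    have herase : ∀ i ∈ univ.erase t, G i (xs i) (zs i) = ρ (xs i) (zs i) := by
      intro i hi; simp [hG, (Finset.mem_erase.mp hi).1]
    rw [hre, Finset.prod_congr rfl herase]
    simp only [hG, if_pos rfl]
    split
    · exact (Finset.mul_prod_erase univ (fun i => ρ (xs i) (zs i)) (mem_univ t)).symm
    · simp
  simp only [key]
  rw [my_sum_sum_prod' G]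
  have hval : ∀ i, (∑ a, ∑ b, G i a b) = if i = t then ρ x z else ∑ a, ∑ b, ρ a b := by
    intro i
    by_cases hi : i = t <;> simp [hG, hi, ite_and, Finset.sum_ite_eq']
  simp only [hval]
  rw [← Finset.mul_prod_erase univ _ (mem_univ t), if_pos rfl]
  congr 1
  rw [Finset.prod_congr rfl (fun i hi => if_neg (Finset.mem_erase.mp hi).1),
    Finset.prod_const, Finset.card_erase_of_mem (mem_univ t), Finset.card_univ]

end Helpers2

section Helpers3
variable {A B C T E : Type*} [Fintype A] [Fintype B] [Fintype C] [Fintype T] [Fintype E]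

lemma my_rot3 (f : A → B → C → ℝ) :
    (∑ a, ∑ b, ∑ c, f a b c) = ∑ c, ∑ a, ∑ b, f a b c := by
  calc (∑ a, ∑ b, ∑ c, f a b c) = ∑ a, ∑ c, ∑ b, f a b c :=
        Finset.sum_congr rfl fun a _ => Finset.sum_comm
    _ = ∑ c, ∑ a, ∑ b, f a b c := Finset.sum_comm

lemma my_pull4 (f : A → B → C → T → E → ℝ) :
    (∑ a, ∑ b, ∑ c, ∑ t, ∑ e, f a b c t e) = ∑ t, ∑ a, ∑ b, ∑ c, ∑ e, f a b c t e := by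
  calc (∑ a, ∑ b, ∑ c, ∑ t, ∑ e, f a b c t e)
      = ∑ a, ∑ b, ∑ t, ∑ c, ∑ e, f a b c t e :=
        Finset.sum_congr rfl fun a _ => Finset.sum_congr rfl fun b _ => Finset.sum_comm
    _ = ∑ a, ∑ t, ∑ b, ∑ c, ∑ e, f a b c t e :=
        Finset.sum_congr rfl fun a _ => Finset.sum_comm
    _ = ∑ t, ∑ a, ∑ b, ∑ c, ∑ e, f a b c t e := Finset.sum_comm

lemma my_pull4' (f : A → B → C → T → ℝ) :
    (∑ a, ∑ b, ∑ c, ∑ t, f a b c t) = ∑ b, ∑ c, ∑ t, ∑ a, f a b c t := by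
  calc (∑ a, ∑ b, ∑ c, ∑ t, f a b c t)
      = ∑ b, ∑ a, ∑ c, ∑ t, f a b c t := Finset.sum_comm
    _ = ∑ b, ∑ c, ∑ a, ∑ t, f a b c t :=
        Finset.sum_congr rfl fun b _ => Finset.sum_comm
    _ = ∑ b, ∑ c, ∑ t, ∑ a, f a b c t :=
        Finset.sum_congr rfl fun b _ => Finset.sum_congr rfl fun c _ => Finset.sum_comm

end Helpers3

/-- Converse step: if `(X^n, Z^n)` are i.i.d. pairs, `K` is independent of `(X^n, Z^n)`,
`M = f_n(X^n, Z^n, K)` for a possibly stochastic encoder `f_n` (modelled by the kernel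
`enc`), and `T` is uniform on `{1,…,n}` and independent of everything else, then
`H(M) ≥ n · I(X_T ; (M,K,T) | Z_T)`.  The joint pmf of `(X_T, (M,K,T), Z_T)` is built
explicitly below, the factor `1/n` accounting for the independent uniform `T`. -/
theorem entropy_message_ge_timeshared_mutual_info
    {Ω 𝒳 𝒵 𝓜 𝒦 : Type} [Fintype Ω] [Fintype 𝒳] [DecidableEq 𝒳]
    [Fintype 𝒵] [DecidableEq 𝒵] [Fintype 𝓜] [DecidableEq 𝓜]
    [Fintype 𝒦] [DecidableEq 𝒦] {n : ℕ} (hn : 0 < n)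
    (μ : Ω → ℝ) (hμ : IsPMF μ)
    (Xs : Ω → Fin n → 𝒳) (Zs : Ω → Fin n → 𝒵) (K : Ω → 𝒦) (M : Ω → 𝓜)
    (pXZ : 𝒳 × 𝒵 → ℝ)
    (hiid : ∀ xs zs, law μ (fun ω => (Xs ω, Zs ω)) (xs, zs) = ∏ i, pXZ (xs i, zs i))
    (hK : ∀ xs zs k, law μ (fun ω => (Xs ω, Zs ω, K ω)) (xs, zs, k)
        = law μ (fun ω => (Xs ω, Zs ω)) (xs, zs) * law μ K k)
    (enc : (Fin n → 𝒳) → (Fin n → 𝒵) → 𝒦 → 𝓜 → ℝ)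
    (henc : ∀ xs zs k, IsPMF (enc xs zs k))
    (hM : ∀ xs zs k m, law μ (fun ω => (Xs ω, Zs ω, K ω, M ω)) (xs, zs, k, m)
        = law μ (fun ω => (Xs ω, Zs ω, K ω)) (xs, zs, k) * enc xs zs k m) :
    (n : ℝ) * condMI (fun t : 𝒳 × (𝓜 × 𝒦 × Fin n) × 𝒵 =>
        (1 / (n : ℝ)) *
          law μ (fun ω => (Xs ω t.2.1.2.2, M ω, K ω, Zs ω t.2.1.2.2))
            (t.1, t.2.1.1, t.2.1.2.1, t.2.2))
      ≤ entropy (law μ M) := by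
  obtain ⟨hμ0, hμ1⟩ := hμ
  have hn' : (n : ℝ) ≠ 0 := Nat.cast_ne_zero.mpr hn.ne'
  set q : 𝓜 → ℝ := law μ M with hqdef
  set J : Fin n → 𝒳 → 𝓜 → 𝒦 → 𝒵 → ℝ :=
    fun t x m k z => law μ (fun ω => (Xs ω t, M ω, K ω, Zs ω t)) (x, m, k, z) with hJdef
  set Jw : Fin n → 𝓜 → 𝒦 → 𝒵 → ℝ := fun t m k z => ∑ x, J t x m k z with hJwdef
  set S : ℝ := ∑ a : 𝒳 × 𝒵, pXZ a with hSdef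
  set p' : 𝒳 × 𝒵 → ℝ := fun a => pXZ a * S ^ (n - 1) with hp'def
  set pz : 𝒵 → ℝ := fun z => ∑ x, p' (x, z) with hpzdef
  set R : Fin n → 𝒳 → 𝓜 → 𝒦 → 𝒵 → ℝ :=
    fun t x m k z => J t x m k z * pz z / (p' (x, z) * Jw t m k z) with hRdef
  set G : (Fin n → 𝒳) × (Fin n → 𝒵) × 𝒦 × 𝓜 → ℝ :=
    fun v => q v.2.2.2 * ∏ t, R t (v.1 t) v.2.2.2 v.2.2.1 (v.2.1 t) with hGdef
  -- rfl-style abbreviation lemmas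
  have hqre : ∀ m, law μ M m = q m := by intro m; rw [hqdef]
  have hJre : ∀ t x m k z,
      law μ (fun ω => (Xs ω t, M ω, K ω, Zs ω t)) (x, m, k, z) = J t x m k z := by
    intro t x m k z; rw [hJdef]
  have hJwre : ∀ t m k z, (∑ x, J t x m k z) = Jw t m k z := by
    intro t m k z; rw [hJwdef]
  have hpzre : ∀ z, (∑ x, p' (x, z)) = pz z := by intro z; rw [hpzdef]
  have hRre : ∀ t x m k z,
      R t x m k z = J t x m k z * pz z / (p' (x, z) * Jw t m k z) := by
    intro t x m k z; rw [hRdef]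
  have hGre : ∀ xs zs k m,
      G (xs, zs, k, m) = q m * ∏ t, R t (xs t) m k (zs t) := by
    intro xs zs k m; rw [hGdef]
  -- basic facts
  have hqsum : ∑ m, q m = 1 := by rw [hqdef]; exact my_sum_law μ M hμ1
  have hq0 : ∀ m, 0 ≤ q m := fun m => (hqre m) ▸ my_law_nonneg μ hμ0 M m
  have hqKsum : ∑ k, law μ K k = 1 := my_sum_law μ K hμ1
  have hqK0 : ∀ k, 0 ≤ law μ K k := my_law_nonneg μ hμ0 K
  have hJ0 : ∀ t x m k z, 0 ≤ J t x m k z := by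
    intro t x m k z; rw [← hJre]; exact my_law_nonneg μ hμ0 _ _
  have hJw0 : ∀ t m k z, 0 ≤ Jw t m k z := by
    intro t m k z; rw [← hJwre]; exact Finset.sum_nonneg fun x _ => hJ0 t x m k z
  have henc1 : ∀ xs zs k m, enc xs zs k m ≤ 1 := by
    intro xs zs k m
    obtain ⟨h0, h1⟩ := henc xs zs k
    rw [← h1]
    exact Finset.single_le_sum (fun m' _ => h0 m') (mem_univ m)
  -- S ^ n = 1
  have hSn : S ^ n = 1 := by
    have h1 : (1:ℝ) = ∑ a : (Fin n → 𝒳) × (Fin n → 𝒵), law μ (fun ω => (Xs ω, Zs ω)) a :=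
      (my_sum_law μ (fun ω => (Xs ω, Zs ω)) hμ1).symm
    rw [Fintype.sum_prod_type] at h1
    simp only [hiid] at h1
    have h2 : (∑ xs : Fin n → 𝒳, ∑ zs : Fin n → 𝒵, ∏ i, pXZ (xs i, zs i))
        = (∑ a : 𝒳, ∑ b : 𝒵, pXZ (a, b)) ^ Fintype.card (Fin n) :=
      my_sum_sum_prod (fun a b => pXZ (a, b))
    rw [h2, Fintype.card_fin] at h1
    rw [hSdef, Fintype.sum_prod_type]
    exact h1.symm
  have hp'sum : ∑ a : 𝒳 × 𝒵, p' a = 1 := by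
    rw [hp'def, ← Finset.sum_mul, ← hSdef, mul_comm]
    calc S ^ (n-1) * S = S ^ (n - 1 + 1) := (pow_succ S (n-1)).symm
      _ = S ^ n := by rw [Nat.sub_add_cancel hn]
      _ = 1 := hSn
  have hp'prod : ∀ (xs : Fin n → 𝒳) (zs : Fin n → 𝒵),
      (∏ i, p' (xs i, zs i)) = ∏ i, pXZ (xs i, zs i) := by
    intro xs zs
    rw [hp'def]
    rw [Finset.prod_mul_distrib, Finset.prod_const, Finset.card_univ, Fintype.card_fin,
      ← pow_mul, Nat.mul_comm, pow_mul, hSn, one_pow, mul_one]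
  have hL : ∀ (t : Fin n) (x : 𝒳) (z : 𝒵),
      law μ (fun ω => (Xs ω t, Zs ω t)) (x, z) = p' (x, z) := by
    intro t x z
    have h1 : law μ (fun ω => (Xs ω t, Zs ω t)) (x, z)
        = ∑ a : (Fin n → 𝒳) × (Fin n → 𝒵),
            if (a.1 t, a.2 t) = (x, z) then law μ (fun ω => (Xs ω, Zs ω)) a else 0 :=
      my_law_comp μ (fun ω => (Xs ω, Zs ω)) (fun a => (a.1 t, a.2 t)) (x, z)
    rw [h1, Fintype.sum_prod_type]
    simp only [hiid, Prod.mk.injEq]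
    have h2 : (∑ xs : Fin n → 𝒳, ∑ zs : Fin n → 𝒵,
          if xs t = x ∧ zs t = z then ∏ i, pXZ (xs i, zs i) else 0)
        = pXZ (x, z) * (∑ a : 𝒳, ∑ b : 𝒵, pXZ (a, b)) ^ (Fintype.card (Fin n) - 1) :=
      my_sum_sum_prod_ite (fun a b => pXZ (a, b)) t x z
    rw [h2, Fintype.card_fin, hp'def]
    congr 1
    rw [hSdef, Fintype.sum_prod_type]
  have hp'0 : ∀ a : 𝒳 × 𝒵, 0 ≤ p' a := by
    rintro ⟨x, z⟩
    rw [← hL ⟨0, hn⟩ x z]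
    exact my_law_nonneg μ hμ0 _ _
  have hpz0 : ∀ z, 0 ≤ pz z := by
    intro z; rw [← hpzre]; exact Finset.sum_nonneg fun x _ => hp'0 (x, z)
  have hpzsum : ∑ z, pz z = 1 := by
    simp only [← hpzre]
    rw [← hp'sum, Fintype.sum_prod_type]
    exact Finset.sum_comm
  have hR0 : ∀ t x m k z, 0 ≤ R t x m k z := by
    intro t x m k z
    rw [hRre]
    exact div_nonneg (mul_nonneg (hJ0 t x m k z) (hpz0 z))
      (mul_nonneg (hp'0 (x, z)) (hJw0 t m k z))
  have hmargJ : ∀ (t : Fin n) (x : 𝒳) (z : 𝒵), (∑ m, ∑ k, J t x m k z) = p' (x, z) := by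
    intro t x z
    have h : (∑ m, ∑ k, J t x m k z) = law μ (fun ω => (Xs ω t, Zs ω t)) (x, z) := by
      simp only [← hJre]
      exact my_law_marg μ (fun ω => Xs ω t) M K (fun ω => Zs ω t) x z
    rw [h, hL]
  -- step 2 generic conversion
  have hstep2 : ∀ (t : Fin n) (F : 𝒳 → 𝓜 → 𝒦 → 𝒵 → ℝ),
      (∑ x, ∑ m, ∑ k, ∑ z, J t x m k z * F x m k z)
        = ∑ ω, μ ω * F (Xs ω t) (M ω) (K ω) (Zs ω t) := by
    intro t F
    have h := my_sum_law_mul μ (fun ω => (Xs ω t, M ω, K ω, Zs ω t))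
      (fun a => F a.1 a.2.1 a.2.2.1 a.2.2.2)
    simp only [Fintype.sum_prod_type] at h
    simpa only [hJre] using h
  -- step 1 : identify condMI
  have hmargX : ∀ (x : 𝒳) (z : 𝒵),
      (∑ y : 𝓜 × 𝒦 × Fin n, (1 / (n:ℝ)) * J y.2.2 x y.1 y.2.1 z) = p' (x, z) := by
    intro x z
    simp only [Fintype.sum_prod_type]
    simp only [← Finset.mul_sum]
    have hswap : (∑ m : 𝓜, ∑ k : 𝒦, ∑ t : Fin n, J t x m k z)
        = ∑ t : Fin n, ∑ m : 𝓜, ∑ k : 𝒦, J t x m k z := my_rot3 _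
    rw [hswap, Finset.sum_congr rfl (fun t _ => hmargJ t x z), Finset.sum_const,
      Finset.card_univ, Fintype.card_fin, nsmul_eq_mul, ← mul_assoc,
      one_div_mul_cancel hn', one_mul]
  have hmargXonly : ∀ (y : 𝓜 × 𝒦 × Fin n) (z : 𝒵),
      (∑ x, (1 / (n:ℝ)) * J y.2.2 x y.1 y.2.1 z) = (1 / (n:ℝ)) * Jw y.2.2 y.1 y.2.1 z := by
    intro y z
    rw [← Finset.mul_sum, hJwre]
  have hptw : ∀ (t : Fin n) (x : 𝒳) (m : 𝓜) (k : 𝒦) (z : 𝒵),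
      (1 / (n:ℝ)) * J t x m k z * Real.log ((1 / (n:ℝ)) * J t x m k z * pz z /
        (p' (x, z) * ((1 / (n:ℝ)) * Jw t m k z)))
      = (1 / (n:ℝ)) * (J t x m k z * Real.log (R t x m k z)) := by
    intro t x m k z
    have harg : (1 / (n:ℝ)) * J t x m k z * pz z /
        (p' (x, z) * ((1 / (n:ℝ)) * Jw t m k z)) = R t x m k z := by
      rw [hRre, mul_assoc,
        show p' (x, z) * ((1 / (n:ℝ)) * Jw t m k z)
          = (1 / (n:ℝ)) * (p' (x, z) * Jw t m k z) by ring,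
        mul_div_mul_left _ _ (one_div_ne_zero hn')]
    rw [harg]; ring
  have hstep1 : condMI (fun t : 𝒳 × (𝓜 × 𝒦 × Fin n) × 𝒵 =>
        (1 / (n : ℝ)) *
          law μ (fun ω => (Xs ω t.2.1.2.2, M ω, K ω, Zs ω t.2.1.2.2))
            (t.1, t.2.1.1, t.2.1.2.1, t.2.2))
      = (1 / (n:ℝ)) * ∑ t : Fin n, ∑ x, ∑ m, ∑ k, ∑ z,
          J t x m k z * Real.log (R t x m k z) := by
    simp only [condMI, hJre]
    simp only [hmargX, hmargXonly, hpzre]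
    simp only [hptw]
    simp only [← Finset.mul_sum]
    congr 1
    simp only [Fintype.sum_prod_type]
    exact my_pull4 fun x m k t z => J t x m k z * Real.log (R t x m k z)
  -- positivity of G on the support
  have hGfacts : ∀ ω : Ω, 0 < μ ω →
      0 < G (Xs ω, Zs ω, K ω, M ω) ∧
      Real.log (G (Xs ω, Zs ω, K ω, M ω))
        = Real.log (q (M ω)) + ∑ t, Real.log (R t (Xs ω t) (M ω) (K ω) (Zs ω t)) := by
    intro ω hω
    have hq1 : 0 < q (M ω) := by
      rw [← hqre]; exact lt_of_lt_of_le hω (my_law_apply_le μ hμ0 M ω)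
    have hRt : ∀ t : Fin n, 0 < R t (Xs ω t) (M ω) (K ω) (Zs ω t) := by
      intro t
      have hJp : 0 < J t (Xs ω t) (M ω) (K ω) (Zs ω t) := by
        rw [← hJre]
        exact lt_of_lt_of_le hω (my_law_apply_le μ hμ0 (fun ω => (Xs ω t, M ω, K ω, Zs ω t)) ω)
      have hJwp : 0 < Jw t (M ω) (K ω) (Zs ω t) := by
        rw [← hJwre]
        exact lt_of_lt_of_le hJp
          (Finset.single_le_sum (fun x _ => hJ0 t x (M ω) (K ω) (Zs ω t)) (mem_univ (Xs ω t)))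
      have hp'p : 0 < p' (Xs ω t, Zs ω t) := by
        rw [← hL t]
        exact lt_of_lt_of_le hω (my_law_apply_le μ hμ0 (fun ω => (Xs ω t, Zs ω t)) ω)
      have hpzp : 0 < pz (Zs ω t) := by
        rw [← hpzre]
        exact lt_of_lt_of_le hp'p
          (Finset.single_le_sum (fun x _ => hp'0 (x, Zs ω t)) (mem_univ (Xs ω t)))
      rw [hRre]
      exact div_pos (mul_pos hJp hpzp) (mul_pos hp'p hJwp)
    have hGapp : G (Xs ω, Zs ω, K ω, M ω)
        = q (M ω) * ∏ t, R t (Xs ω t) (M ω) (K ω) (Zs ω t) := hGre (Xs ω) (Zs ω) (K ω) (M ω)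
    have hprodpos : 0 < ∏ t, R t (Xs ω t) (M ω) (K ω) (Zs ω t) :=
      Finset.prod_pos fun t _ => hRt t
    constructor
    · rw [hGapp]; exact mul_pos hq1 hprodpos
    · rw [hGapp, Real.log_mul (ne_of_gt hq1) (ne_of_gt hprodpos),
        Real.log_prod (fun t _ => (hRt t).ne')]
  -- the factorization of the joint law
  have hfact : ∀ (xs : Fin n → 𝒳) (zs : Fin n → 𝒵) (k : 𝒦) (m : 𝓜),
      law μ (fun ω => (Xs ω, Zs ω, K ω, M ω)) (xs, zs, k, m)
        = (∏ i, p' (xs i, zs i)) * law μ K k * enc xs zs k m := by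
    intro xs zs k m
    rw [hM xs zs k m, hK xs zs k, hiid xs zs, ← hp'prod xs zs]
  -- the expectation bound
  have hE : (∑ ω, μ ω * G (Xs ω, Zs ω, K ω, M ω)) ≤ 1 := by
    have h' : (∑ ω, μ ω * G (Xs ω, Zs ω, K ω, M ω))
        = ∑ a : (Fin n → 𝒳) × (Fin n → 𝒵) × 𝒦 × 𝓜,
            law μ (fun ω => (Xs ω, Zs ω, K ω, M ω)) a * G a :=
      (my_sum_law_mul μ (fun ω => (Xs ω, Zs ω, K ω, M ω)) G).symm
    rw [h']
    simp only [Fintype.sum_prod_type]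
    simp only [hfact, hGre]
    rw [my_pull4']
    have hb1 : ∀ (zs : Fin n → 𝒵) (k : 𝒦) (m : 𝓜),
        (∑ xs, (∏ i, p' (xs i, zs i)) * law μ K k * enc xs zs k m *
          (q m * ∏ t, R t (xs t) m k (zs t)))
        ≤ law μ K k * q m * ∏ t, pz (zs t) := by
      intro zs k m
      have hfac : ∀ (t : Fin n) (x : 𝒳),
          p' (x, zs t) * R t x m k (zs t)
            ≤ J t x m k (zs t) * (pz (zs t) / Jw t m k (zs t)) := by
        intro t x
        rw [hRre]
        rcases eq_or_ne (p' (x, zs t)) 0 with h0 | h0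
        · rw [h0, zero_mul]
          exact mul_nonneg (hJ0 t x m k (zs t)) (div_nonneg (hpz0 (zs t)) (hJw0 t m k (zs t)))
        · rcases eq_or_ne (Jw t m k (zs t)) 0 with hw | hw
          · rw [hw]; simp
          · apply le_of_eq; field_simp
      have hHt : ∀ t : Fin n,
          (∑ x, J t x m k (zs t) * (pz (zs t) / Jw t m k (zs t))) ≤ pz (zs t) := by
        intro t
        rw [← Finset.sum_mul, hJwre]
        rcases eq_or_ne (Jw t m k (zs t)) 0 with hw | hw
        · rw [hw, zero_mul]; exact hpz0 (zs t)
        · rw [mul_comm, div_mul_cancel₀ _ hw]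
      calc (∑ xs, (∏ i, p' (xs i, zs i)) * law μ K k * enc xs zs k m *
            (q m * ∏ t, R t (xs t) m k (zs t)))
          = ∑ xs : Fin n → 𝒳, law μ K k * q m *
              (enc xs zs k m * ∏ t, (p' (xs t, zs t) * R t (xs t) m k (zs t))) := by
            refine Finset.sum_congr rfl fun xs _ => ?_
            conv_rhs => rw [Finset.prod_mul_distrib]
            ring
        _ ≤ ∑ xs : Fin n → 𝒳, law μ K k * q m *
              ∏ t, (J t (xs t) m k (zs t) * (pz (zs t) / Jw t m k (zs t))) := by
            refine Finset.sum_le_sum fun xs _ => ?_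
            refine mul_le_mul_of_nonneg_left ?_ (mul_nonneg (hqK0 k) (hq0 m))
            calc enc xs zs k m * ∏ t, (p' (xs t, zs t) * R t (xs t) m k (zs t))
                ≤ 1 * ∏ t, (J t (xs t) m k (zs t) * (pz (zs t) / Jw t m k (zs t))) := by
                  refine mul_le_mul (henc1 xs zs k m)
                    (Finset.prod_le_prod
                      (fun t _ => mul_nonneg (hp'0 (xs t, zs t)) (hR0 t (xs t) m k (zs t)))
                      (fun t _ => hfac t (xs t)))
                    (Finset.prod_nonneg fun t _ =>
                      mul_nonneg (hp'0 (xs t, zs t)) (hR0 t (xs t) m k (zs t)))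
                    zero_le_one
              _ = ∏ t, (J t (xs t) m k (zs t) * (pz (zs t) / Jw t m k (zs t))) := one_mul _
        _ = law μ K k * q m *
              ∑ xs : Fin n → 𝒳, ∏ t, (J t (xs t) m k (zs t) * (pz (zs t) / Jw t m k (zs t))) := by
            rw [← Finset.mul_sum]
        _ = law μ K k * q m *
              ∏ t, ∑ x, (J t x m k (zs t) * (pz (zs t) / Jw t m k (zs t))) := by
            congr 1
            exact (Fintype.prod_sum (fun t x => J t x m k (zs t) * (pz (zs t) / Jw t m k (zs t)))).symm
        _ ≤ law μ K k * q m * ∏ t, pz (zs t) := by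
            refine mul_le_mul_of_nonneg_left
              (Finset.prod_le_prod
                (fun t _ => Finset.sum_nonneg fun x _ =>
                  mul_nonneg (hJ0 t x m k (zs t)) (div_nonneg (hpz0 (zs t)) (hJw0 t m k (zs t))))
                (fun t _ => hHt t))
              (mul_nonneg (hqK0 k) (hq0 m))
    refine le_trans (Finset.sum_le_sum fun zs _ => Finset.sum_le_sum fun k _ =>
      Finset.sum_le_sum fun m _ => hb1 zs k m) ?_
    have hfin1 : ∀ zs : Fin n → 𝒵,
        (∑ k, ∑ m, law μ K k * q m * ∏ t, pz (zs t)) = ∏ t, pz (zs t) := by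
      intro zs
      simp only [mul_assoc, ← Finset.mul_sum]
      rw [← Finset.sum_mul, ← Finset.sum_mul, hqsum, one_mul, hqKsum, one_mul]
    simp only [hfin1]
    rw [show (∑ zs : Fin n → 𝒵, ∏ t, pz (zs t)) = ∏ t : Fin n, ∑ z, pz z from
      (Fintype.prod_sum fun _ z => pz z).symm]
    simp [hpzsum]
  -- entropy identity
  have hent : entropy q = -∑ ω, μ ω * Real.log (q (M ω)) := by
    have h := my_sum_law_mul μ M (fun m => Real.log (q m))
    simp only [hqre] at h
    simp only [entropy]
    rw [h]
  -- main identity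
  have h2t : ∀ t : Fin n, (∑ x, ∑ m, ∑ k, ∑ z, J t x m k z * Real.log (R t x m k z))
      = ∑ ω, μ ω * Real.log (R t (Xs ω t) (M ω) (K ω) (Zs ω t)) :=
    fun t => hstep2 t (fun x m k z => Real.log (R t x m k z))
  have hmain : (n : ℝ) * condMI (fun t : 𝒳 × (𝓜 × 𝒦 × Fin n) × 𝒵 =>
        (1 / (n : ℝ)) *
          law μ (fun ω => (Xs ω t.2.1.2.2, M ω, K ω, Zs ω t.2.1.2.2))
            (t.1, t.2.1.1, t.2.1.2.1, t.2.2))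
      = ∑ ω, μ ω * ∑ t, Real.log (R t (Xs ω t) (M ω) (K ω) (Zs ω t)) := by
    rw [hstep1, ← mul_assoc, mul_one_div_cancel hn', one_mul,
      Finset.sum_congr rfl (fun t _ => h2t t), Finset.sum_comm]
    exact Finset.sum_congr rfl fun ω _ => by rw [Finset.mul_sum]
  -- final inequality
  rw [hmain, hent]
  have hkey : ∀ ω : Ω, μ ω * (1 - G (Xs ω, Zs ω, K ω, M ω))
      ≤ μ ω * (-(Real.log (q (M ω)) + ∑ t, Real.log (R t (Xs ω t) (M ω) (K ω) (Zs ω t)))) := by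
    intro ω
    rcases (hμ0 ω).eq_or_lt with h | h
    · rw [← h]; simp
    · obtain ⟨hGp, hGlog⟩ := hGfacts ω h
      refine mul_le_mul_of_nonneg_left ?_ (le_of_lt h)
      rw [← hGlog]
      have := Real.log_le_sub_one_of_pos hGp
      linarith
  have h5 := Finset.sum_le_sum fun ω (_ : ω ∈ univ) => hkey ω
  have h6 : (∑ ω, μ ω * (1 - G (Xs ω, Zs ω, K ω, M ω)))
      = 1 - ∑ ω, μ ω * G (Xs ω, Zs ω, K ω, M ω) := by
    simp only [mul_sub, mul_one]
    rw [Finset.sum_sub_distrib, hμ1]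
  have h7 : (∑ ω, μ ω * (-(Real.log (q (M ω))
        + ∑ t, Real.log (R t (Xs ω t) (M ω) (K ω) (Zs ω t)))))
      = -(∑ ω, μ ω * Real.log (q (M ω)))
        - ∑ ω, μ ω * ∑ t, Real.log (R t (Xs ω t) (M ω) (K ω) (Zs ω t)) := by
    simp only [neg_add, mul_add, mul_neg, Finset.sum_add_distrib, Finset.sum_neg_distrib]
    ring
  rw [h6, h7] at h5
  linarith [hE]

end
end

section
/- Let (X^n, Z^n) be i.i.d. pairs with values in finite alphabets, let K be a finite-valued random variable independent of (X^n, Z^n), let M = f_n(X^n, Z^n, K) for a (possibly stochastic) function f_n, let Y^n = g_n(M, Z^n, K) for a (possibly stochastic) function g_n, and suppose the pairs (Y_i, Z_i), i = 1,…,n, are jointly i.i.d. Let T be uniformly distributed on {1,…,n} and independent of everything else. Then H(M,K) ≥ n · I(Y_T ; (M,K,T) | Z_T), where H denotes Shannon entropy and I(·;·|·) conditional mutual information. -/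
open scoped BigOperators
open Finset Filter

noncomputable section

set_option linter.unusedSectionVars false
set_option maxHeartbeats 1000000

section Lib

variable {Ω α β γ : Type*} [Fintype Ω] [Fintype α] [Fintype β] [Fintype γ]
  [DecidableEq α] [DecidableEq β] [DecidableEq γ]

lemma law_nonneg (μ : Ω → ℝ) (hμ : ∀ ω, 0 ≤ μ ω) (f : Ω → α) (a : α) :
    0 ≤ law μ f a :=
  Finset.sum_nonneg fun ω _ => by by_cases h : f ω = a <;> simp [h, hμ ω]

lemma law_sum (μ : Ω → ℝ) (f : Ω → α) : ∑ a, law μ f a = ∑ ω, μ ω := by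
  unfold law
  rw [Finset.sum_comm]
  exact Finset.sum_congr rfl fun ω _ => by simp

lemma law_pmf {μ : Ω → ℝ} (hμ : IsPMF μ) (f : Ω → α) : IsPMF (law μ f) :=
  ⟨law_nonneg μ hμ.1 f, by rw [law_sum]; exact hμ.2⟩

lemma law_comp (μ : Ω → ℝ) (f : Ω → α) (g : α → β) :
    law μ (fun ω => g (f ω)) = law (law μ f) g := by
  funext b
  unfold law
  rw [show (∑ a : α, if g a = b then (∑ ω, if f ω = a then μ ω else 0) else 0)
      = ∑ a : α, ∑ ω, (if f ω = a then (if g a = b then μ ω else 0) else 0) from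
    Finset.sum_congr rfl fun a _ => by split <;> simp]
  rw [Finset.sum_comm]
  refine Finset.sum_congr rfl fun ω _ => ?_
  rw [Finset.sum_ite_eq Finset.univ (f ω) (fun a => if g a = b then μ ω else 0)]
  simp

lemma law_congr (μ : Ω → ℝ) (f : Ω → α) (g : Ω → β) (a : α) (b : β)
    (h : ∀ ω, f ω = a ↔ g ω = b) : law μ f a = law μ g b := by
  unfold law
  exact Finset.sum_congr rfl fun ω _ => by rw [if_congr (h ω) rfl rfl]

lemma law_apply_eq (p : α → ℝ) {e : α → β} (he : Function.Injective e) (a : α) :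
    law p e (e a) = p a := by
  unfold law
  rw [Finset.sum_eq_single a]
  · simp
  · intro c _ hc; rw [if_neg (fun h => hc (he h))]
  · simp

lemma law_eq_zero (p : α → ℝ) (e : α → β) (b : β) (hb : ∀ a, e a ≠ b) :
    law p e b = 0 := by
  unfold law
  exact Finset.sum_eq_zero fun a _ => if_neg (hb a)

/-- entropy unchanged under injective pushforward -/
lemma entropy_law_inj (p : α → ℝ) {e : α → β} (he : Function.Injective e) :
    entropy (law p e) = entropy p := by
  unfold entropy
  congr 1
  rw [← Finset.sum_subset (Finset.subset_univ (Finset.univ.image e))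
    (fun b _ hb => by
      have : law p e b = 0 := law_eq_zero p e b fun a h =>
        hb (Finset.mem_image.2 ⟨a, Finset.mem_univ a, h⟩)
      simp [this])]
  rw [Finset.sum_image (fun a _ a' _ h => he h)]
  exact Finset.sum_congr rfl fun a _ => by rw [law_apply_eq p he]

/-- data processing: entropy of pushforward is at most entropy -/
lemma entropy_law_le {p : α → ℝ} (hp : IsPMF p) (g : α → β) :
    entropy (law p g) ≤ entropy p := by
  unfold entropy
  rw [neg_le_neg_iff]
  have key : ∑ b, law p g b * Real.log (law p g b)
      = ∑ a, p a * Real.log (law p g (g a)) := by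
    rw [show (∑ b, law p g b * Real.log (law p g b))
        = ∑ b, ∑ a, (if g a = b then p a * Real.log (law p g b) else 0) from
      Finset.sum_congr rfl fun b _ => by
        rw [law, Finset.sum_mul]
        exact Finset.sum_congr rfl fun a _ => by split <;> simp]
    rw [Finset.sum_comm]
    refine Finset.sum_congr rfl fun a _ => ?_
    rw [Finset.sum_ite_eq Finset.univ (g a)
      (fun b => p a * Real.log (law p g b))]
    simp
  rw [key]
  refine Finset.sum_le_sum fun a _ => ?_
  rcases eq_or_lt_of_le (hp.1 a) with h | h
  · simp [← h]
  · refine mul_le_mul_of_nonneg_left (Real.log_le_log h ?_) (hp.1 a)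
    unfold law
    refine Finset.single_le_sum (f := fun ω => if g ω = g a then p ω else 0)
      (fun ω _ => by split <;> simp [hp.1 ω]) (Finset.mem_univ a) |>.trans_eq' ?_
    simp


end Lib

section Lib2
variable {α β γ ι : Type*} [Fintype α] [Fintype β] [Fintype γ] [Fintype ι]

lemma entropy_submodular {p : α × β × γ → ℝ} (hp : IsPMF p) :
    entropy p + entropy (fun b : β => ∑ a, ∑ c, p (a, b, c))
      ≤ entropy (fun x : α × β => ∑ c, p (x.1, x.2, c))
        + entropy (fun x : β × γ => ∑ a, p (a, x.1, x.2)) := by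
  set A12 : α → β → ℝ := fun a b => ∑ c, p (a, b, c) with hA12def
  set A23 : β → γ → ℝ := fun b c => ∑ a, p (a, b, c) with hA23def
  set A2 : β → ℝ := fun b => ∑ a, ∑ c, p (a, b, c) with hA2def
  have hpnn : ∀ t, 0 ≤ p t := hp.1
  have hA12nn : ∀ a b, 0 ≤ A12 a b := fun a b =>
    Finset.sum_nonneg fun c _ => hpnn _
  have hA23nn : ∀ b c, 0 ≤ A23 b c := fun b c =>
    Finset.sum_nonneg fun a _ => hpnn _
  have hA2nn : ∀ b, 0 ≤ A2 b := fun b =>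
    Finset.sum_nonneg fun a _ => Finset.sum_nonneg fun c _ => hpnn _
  have hple12 : ∀ a b c, p (a, b, c) ≤ A12 a b := fun a b c =>
    Finset.single_le_sum (fun c _ => hpnn (a, b, c)) (Finset.mem_univ c)
  have hple23 : ∀ a b c, p (a, b, c) ≤ A23 b c := fun a b c =>
    Finset.single_le_sum (fun a _ => hpnn (a, b, c)) (Finset.mem_univ a)
  have h12le2 : ∀ a b, A12 a b ≤ A2 b := fun a b =>
    Finset.single_le_sum (f := fun a => ∑ c, p (a, b, c))
      (fun a _ => Finset.sum_nonneg fun c _ => hpnn _) (Finset.mem_univ a)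
  -- rewrite the four entropies as triple sums
  have e_p : entropy p = -∑ a, ∑ b, ∑ c,
      p (a, b, c) * Real.log (p (a, b, c)) := by
    unfold entropy
    rw [Fintype.sum_prod_type]
    congr 1
    exact Finset.sum_congr rfl fun a _ => by rw [Fintype.sum_prod_type]
  have e_12 : entropy (fun x : α × β => ∑ c, p (x.1, x.2, c))
      = -∑ a, ∑ b, ∑ c, p (a, b, c) * Real.log (A12 a b) := by
    unfold entropy
    rw [Fintype.sum_prod_type]
    congr 1
    refine Finset.sum_congr rfl fun a _ => Finset.sum_congr rfl fun b _ => ?_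
    exact Finset.sum_mul _ _ _
  have e_23 : entropy (fun x : β × γ => ∑ a, p (a, x.1, x.2))
      = -∑ a, ∑ b, ∑ c, p (a, b, c) * Real.log (A23 b c) := by
    unfold entropy
    rw [Fintype.sum_prod_type]
    rw [Finset.sum_comm (s := Finset.univ) (t := Finset.univ)
      (f := fun a b => ∑ c, p (a, b, c) * Real.log (A23 b c))]
    congr 1
    refine Finset.sum_congr rfl fun b _ => ?_
    rw [Finset.sum_comm (s := Finset.univ) (t := Finset.univ)
      (f := fun a c => p (a, b, c) * Real.log (A23 b c))]
    refine Finset.sum_congr rfl fun c _ => ?_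
    exact Finset.sum_mul _ _ _
  have e_2 : entropy A2
      = -∑ a, ∑ b, ∑ c, p (a, b, c) * Real.log (A2 b) := by
    unfold entropy
    rw [Finset.sum_comm (s := Finset.univ) (t := Finset.univ)
      (f := fun a b => ∑ c, p (a, b, c) * Real.log (A2 b))]
    congr 1
    refine Finset.sum_congr rfl fun b _ => ?_
    rw [show A2 b * Real.log (A2 b) = ∑ a, (∑ c, p (a, b, c)) * Real.log (A2 b)
      from Finset.sum_mul _ _ _]
    exact Finset.sum_congr rfl fun a _ => Finset.sum_mul _ _ _
  rw [e_p, e_12, e_23, e_2, ← sub_nonneg]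
  have key : (-∑ a, ∑ b, ∑ c, p (a, b, c) * Real.log (A12 a b))
      + (-∑ a, ∑ b, ∑ c, p (a, b, c) * Real.log (A23 b c))
      - ((-∑ a, ∑ b, ∑ c, p (a, b, c) * Real.log (p (a, b, c)))
        + (-∑ a, ∑ b, ∑ c, p (a, b, c) * Real.log (A2 b)))
      = ∑ a, ∑ b, ∑ c, (p (a, b, c) * Real.log (p (a, b, c))
          + p (a, b, c) * Real.log (A2 b)
          - p (a, b, c) * Real.log (A12 a b)
          - p (a, b, c) * Real.log (A23 b c)) := by
    rw [show ∀ w x y z : ℝ, -y + -z - (-w + -x) = (w + x) - (y + z) from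
      fun w x y z => by ring]
    rw [← Finset.sum_add_distrib, ← Finset.sum_add_distrib, ← Finset.sum_sub_distrib]
    refine Finset.sum_congr rfl fun a _ => ?_
    rw [← Finset.sum_add_distrib, ← Finset.sum_add_distrib, ← Finset.sum_sub_distrib]
    refine Finset.sum_congr rfl fun b _ => ?_
    rw [← Finset.sum_add_distrib, ← Finset.sum_add_distrib, ← Finset.sum_sub_distrib]
    exact Finset.sum_congr rfl fun c _ => by ring
  rw [key]
  -- pointwise lower bound
  have pointwise : ∀ a b c,
      p (a, b, c) - (if p (a, b, c) = 0 then 0 else A12 a b * A23 b c / A2 b)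
      ≤ p (a, b, c) * Real.log (p (a, b, c))
          + p (a, b, c) * Real.log (A2 b)
          - p (a, b, c) * Real.log (A12 a b)
          - p (a, b, c) * Real.log (A23 b c) := by
    intro a b c
    by_cases h0 : p (a, b, c) = 0
    · simp [h0]
    · have hppos : 0 < p (a, b, c) := lt_of_le_of_ne (hpnn _) (Ne.symm h0)
      have h12 : 0 < A12 a b := lt_of_lt_of_le hppos (hple12 a b c)
      have h23 : 0 < A23 b c := lt_of_lt_of_le hppos (hple23 a b c)
      have h2 : 0 < A2 b := lt_of_lt_of_le h12 (h12le2 a b)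
      rw [if_neg h0]
      have hX : 0 < A12 a b * A23 b c / (A2 b * p (a, b, c)) :=
        div_pos (mul_pos h12 h23) (mul_pos h2 hppos)
      have hlog := Real.log_le_sub_one_of_pos hX
      have hexpand : Real.log (A12 a b * A23 b c / (A2 b * p (a, b, c)))
          = Real.log (A12 a b) + Real.log (A23 b c)
            - Real.log (A2 b) - Real.log (p (a, b, c)) := by
        rw [Real.log_div (by positivity) (by positivity),
          Real.log_mul (ne_of_gt h12) (ne_of_gt h23),
          Real.log_mul (ne_of_gt h2) h0]
        ring
      have hmul := mul_le_mul_of_nonneg_left hlog (hpnn (a, b, c))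
      rw [hexpand] at hmul
      have hcalc : p (a, b, c) * (A12 a b * A23 b c / (A2 b * p (a, b, c)) - 1)
          = A12 a b * A23 b c / A2 b - p (a, b, c) := by
        field_simp
      rw [hcalc] at hmul
      nlinarith [hmul]
  calc (0:ℝ) ≤ (∑ a, ∑ b, ∑ c, p (a, b, c))
        - ∑ a, ∑ b, ∑ c,
            (if p (a, b, c) = 0 then 0 else A12 a b * A23 b c / A2 b) := by
        have h1 : (∑ a, ∑ b, ∑ c, p (a, b, c)) = 1 := by
          rw [← hp.2, Fintype.sum_prod_type]
          exact Finset.sum_congr rfl fun a _ => by rw [Fintype.sum_prod_type]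
        have h2 : ∑ a, ∑ b, ∑ c,
            (if p (a, b, c) = 0 then 0 else A12 a b * A23 b c / A2 b) ≤ 1 := by
          have step1 : ∑ a, ∑ b, ∑ c,
              (if p (a, b, c) = 0 then 0 else A12 a b * A23 b c / A2 b)
              ≤ ∑ a, ∑ b, ∑ c, A12 a b * A23 b c / A2 b := by
            refine Finset.sum_le_sum fun a _ => Finset.sum_le_sum fun b _ =>
              Finset.sum_le_sum fun c _ => ?_
            split
            · exact div_nonneg (mul_nonneg (hA12nn a b) (hA23nn b c)) (hA2nn b)
            · exact le_rfl
          have step2 : ∑ a, ∑ b, ∑ c, A12 a b * A23 b c / A2 b ≤ 1 := by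
            rw [Finset.sum_comm (s := Finset.univ) (t := Finset.univ)
              (f := fun a b => ∑ c, A12 a b * A23 b c / A2 b)]
            have perb : ∀ b, ∑ a, ∑ c, A12 a b * A23 b c / A2 b ≤ A2 b := by
              intro b
              have e1 : ∀ a, ∑ c, A12 a b * A23 b c / A2 b
                  = A12 a b * (∑ c, A23 b c) / A2 b := by
                intro a
                rw [← Finset.sum_div, ← Finset.mul_sum]
              have e2 : (∑ c, A23 b c) = A2 b := by
                rw [hA2def]
                exact Finset.sum_comm
              have e3 : (∑ a, A12 a b) = A2 b := rfl
              calc ∑ a, ∑ c, A12 a b * A23 b c / A2 b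
                  = ∑ a, A12 a b * A2 b / A2 b := by
                    refine Finset.sum_congr rfl fun a _ => ?_
                    rw [e1, e2]
                _ = (∑ a, A12 a b) * A2 b / A2 b := by
                    rw [Finset.sum_mul, Finset.sum_div]
                _ = A2 b * A2 b / A2 b := by rw [e3]
                _ ≤ A2 b := by
                    by_cases h : A2 b = 0
                    · simp [h]
                    · rw [mul_div_assoc, div_self h, mul_one]
            have sumb : (∑ b, A2 b) = 1 := by
              rw [← h1, hA2def]
              exact Finset.sum_comm
            calc ∑ b, ∑ a, ∑ c, A12 a b * A23 b c / A2 b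
                ≤ ∑ b, A2 b := Finset.sum_le_sum fun b _ => perb b
              _ = 1 := sumb
          exact step1.trans step2
        linarith
    _ ≤ _ := by
        rw [← Finset.sum_sub_distrib]
        refine Finset.sum_le_sum fun a _ => ?_
        rw [← Finset.sum_sub_distrib]
        refine Finset.sum_le_sum fun b _ => ?_
        rw [← Finset.sum_sub_distrib]
        exact Finset.sum_le_sum fun c _ => pointwise a b c
lemma entropy_comp_equiv (e : β ≃ α) (p : α → ℝ) :
    entropy (fun b => p (e b)) = entropy p := by
  unfold entropy
  congr 1
  exact Equiv.sum_comp e (fun a => p a * Real.log (p a))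

lemma sum_prod_fun [DecidableEq ι] (r : ι → β → ℝ) :
    ∑ f : ι → β, ∏ i, r i (f i) = ∏ i, ∑ b, r i b :=
  (Fintype.prod_sum r).symm

lemma prod_pmf [DecidableEq ι] {r : β → ℝ} (hr : IsPMF r) :
    IsPMF (fun f : ι → β => ∏ i, r (f i)) := by
  constructor
  · exact fun f => Finset.prod_nonneg fun i _ => hr.1 _
  · rw [sum_prod_fun (fun _ b => r b)]
    simp [hr.2]

lemma entropy_indep {p : α → ℝ} {q : β → ℝ} (hp : IsPMF p) (hq : IsPMF q) :
    entropy (fun x : α × β => p x.1 * q x.2) = entropy p + entropy q := by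
  unfold entropy
  rw [Fintype.sum_prod_type]
  have pt : ∀ a b, p a * q b * Real.log (p a * q b)
      = (p a * Real.log (p a)) * q b + p a * (q b * Real.log (q b)) := by
    intro a b
    by_cases ha : p a = 0
    · simp [ha]
    by_cases hb : q b = 0
    · simp [hb]
    rw [Real.log_mul ha hb]; ring
  have : ∀ a : α, ∑ b, p a * q b * Real.log (p a * q b)
      = (p a * Real.log (p a)) + p a * (∑ b, q b * Real.log (q b)) := by
    intro a
    rw [show (∑ b, p a * q b * Real.log (p a * q b))
        = ∑ b, ((p a * Real.log (p a)) * q b + p a * (q b * Real.log (q b))) from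
      Finset.sum_congr rfl fun b _ => pt a b]
    rw [Finset.sum_add_distrib, ← Finset.mul_sum, ← Finset.mul_sum, hq.2, mul_one]
  rw [Finset.sum_congr rfl fun a _ => this a, Finset.sum_add_distrib,
    ← Finset.sum_mul, hp.2, one_mul]
  ring

lemma entropy_prodDist {r : β → ℝ} (hr : IsPMF r) :
    ∀ n : ℕ, entropy (fun f : Fin n → β => ∏ i, r (f i)) = n * entropy r := by
  intro n
  induction n with
  | zero => simp [entropy]
  | succ n ih =>
    have h1 : entropy (fun f : Fin (n + 1) → β => ∏ i, r (f i))
        = entropy (fun x : β × (Fin n → β) => r x.1 * ∏ i, r (x.2 i)) := by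
      rw [← entropy_comp_equiv (Fin.consEquiv fun _ : Fin (n + 1) => β)
        (fun f => ∏ i, r (f i))]
      congr 1
      funext x
      rw [show (Fin.consEquiv fun _ : Fin (n + 1) => β) x = Fin.cons x.1 x.2 from rfl,
        Fin.prod_univ_succ]
      simp
    rw [h1, entropy_indep hr (prod_pmf hr), ih]
    push_cast
    ring

/-- marginal of a product distribution at one coordinate -/
lemma sum_prod_marg [DecidableEq ι] [DecidableEq β] {r : β → ℝ} (hr : IsPMF r)
    (t : ι) (b : β) :
    ∑ f : ι → β, (if f t = b then ∏ i, r (f i) else 0) = r b := by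
  classical
  rw [← Equiv.sum_comp (Equiv.funSplitAt t β).symm
    (fun f : ι → β => if f t = b then ∏ i, r (f i) else 0)]
  have ev : ∀ x : β × ({ j // j ≠ t } → β), (Equiv.funSplitAt t β).symm x t = x.1 := by
    intro x; simp [Equiv.funSplitAt, Equiv.piSplitAt]
  have prodsplit : ∀ x : β × ({ j // j ≠ t } → β),
      (∏ i, r ((Equiv.funSplitAt t β).symm x i)) = r x.1 * ∏ j : { j // j ≠ t }, r (x.2 j) := by
    intro x
    rw [show (∏ i, r ((Equiv.funSplitAt t β).symm x i))
        = ∏ i, (fun i => r ((Equiv.funSplitAt t β).symm x i)) i from rfl]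
    rw [← Finset.prod_erase_mul Finset.univ _ (Finset.mem_univ t)]
    rw [ev]
    rw [mul_comm]
    congr 1
    rw [Finset.prod_subtype (Finset.univ.erase t) (p := fun j => j ≠ t)
      (fun x => by simp) (fun i => r ((Equiv.funSplitAt t β).symm x i))]
    refine Finset.prod_congr rfl fun j _ => ?_
    have hjt : (j : ι) ≠ t := j.2
    simp [Equiv.funSplitAt, Equiv.piSplitAt, hjt]
  rw [Finset.sum_congr rfl fun x _ => by rw [ev x, prodsplit x]]
  rw [Fintype.sum_prod_type]
  rw [Finset.sum_eq_single b]
  · refine Eq.trans (Finset.sum_congr rfl fun y _ => if_pos rfl) ?_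
    show (∑ y : { j // j ≠ t } → β, r b * ∏ j, r (y j)) = r b
    rw [← Finset.mul_sum, sum_prod_fun (fun (_ : { j // j ≠ t }) b => r b)]
    simp [hr.2]
  · intro c _ hc
    rw [Finset.sum_eq_zero fun g _ => if_neg hc]
  · simp

end Lib2


section Lib3
variable {α β γ δ : Type*} [Fintype α] [Fintype β] [Fintype γ] [Fintype δ]

lemma law_fst [DecidableEq α] (q : α × γ → ℝ) (a : α) :
    law q Prod.fst a = ∑ c, q (a, c) := by
  unfold law
  rw [Fintype.sum_prod_type]
  rw [Finset.sum_eq_single a]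
  · exact Finset.sum_congr rfl fun c _ => if_pos rfl
  · intro a' _ ha'
    exact Finset.sum_eq_zero fun c _ => if_neg ha'
  · simp

lemma law_snd [DecidableEq γ] (q : α × γ → ℝ) (c : γ) :
    law q Prod.snd c = ∑ a, q (a, c) := by
  unfold law
  rw [Fintype.sum_prod_type]
  refine Finset.sum_congr rfl fun a _ => ?_
  rw [Finset.sum_ite_eq' Finset.univ c (fun c' => q (a, c'))]
  simp

lemma law_proj2 [DecidableEq β] (p : α × β × γ → ℝ) (b : β) :
    law p (fun t => t.2.1) b = ∑ a, ∑ c, p (a, b, c) := by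
  unfold law
  rw [Fintype.sum_prod_type]
  refine Finset.sum_congr rfl fun a _ => ?_
  rw [Fintype.sum_prod_type]
  rw [Finset.sum_eq_single b]
  · exact Finset.sum_congr rfl fun c _ => if_pos rfl
  · intro b' _ hb'
    exact Finset.sum_eq_zero fun c _ => if_neg hb'
  · simp

lemma law_proj12 [DecidableEq α] [DecidableEq β] (p : α × β × γ → ℝ) (a : α) (b : β) :
    law p (fun t => (t.1, t.2.1)) (a, b) = ∑ c, p (a, b, c) := by
  unfold law
  rw [Fintype.sum_prod_type]
  rw [Finset.sum_eq_single a]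
  · rw [Fintype.sum_prod_type]
    rw [Finset.sum_eq_single b]
    · refine Finset.sum_congr rfl fun c _ => if_pos (by simp)
    · intro b' _ hb'
      exact Finset.sum_eq_zero fun c _ => if_neg (by simp [hb'])
    · simp
  · intro a' _ ha'
    rw [Fintype.sum_prod_type]
    exact Finset.sum_eq_zero fun b' _ => Finset.sum_eq_zero fun c _ =>
      if_neg (by simp [ha'])
  · simp

lemma law_proj23 [DecidableEq β] [DecidableEq γ] (p : α × β × γ → ℝ) (x : β × γ) :
    law p Prod.snd x = ∑ a, p (a, x.1, x.2) :=
  law_snd p x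

end Lib3

section Lib4
variable {Ω : Type*} [Fintype Ω] {μ : Ω → ℝ}
variable {α β γ δ : Type*} [Fintype α] [Fintype β] [Fintype γ] [Fintype δ]
  [DecidableEq α] [DecidableEq β] [DecidableEq γ] [DecidableEq δ]

/-- entropy is invariant under injective recoding of a random variable -/
lemma Hrel (hμ : IsPMF μ) {f : Ω → α} {g : Ω → β} {e : α → β}
    (he : Function.Injective e) (hfg : ∀ ω, g ω = e (f ω)) :
    entropy (law μ g) = entropy (law μ f) := by
  rw [show g = fun ω => e (f ω) from funext hfg, law_comp, entropy_law_inj _ he]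

/-- entropy of a function of a random variable is at most the entropy -/
lemma Hle (hμ : IsPMF μ) {f : Ω → α} {g : Ω → β} {e : α → β}
    (hfg : ∀ ω, g ω = e (f ω)) :
    entropy (law μ g) ≤ entropy (law μ f) := by
  rw [show g = fun ω => e (f ω) from funext hfg, law_comp]
  exact entropy_law_le (law_pmf hμ f) e

/-- marginal entropy is at most joint entropy -/
lemma Hsnd_le (hμ : IsPMF μ) (A : Ω → α) (B : Ω → β) :
    entropy (law μ B) ≤ entropy (law μ (fun ω => (A ω, B ω))) :=
  Hle hμ (e := Prod.snd) (fun ω => rfl)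

/-- submodularity at the random-variable level -/
lemma Hsubmodular (hμ : IsPMF μ) (A : Ω → α) (B : Ω → β) (C : Ω → γ) :
    entropy (law μ (fun ω => (A ω, B ω, C ω))) + entropy (law μ B)
      ≤ entropy (law μ (fun ω => (A ω, B ω)))
        + entropy (law μ (fun ω => (B ω, C ω))) := by
  set p := law μ (fun ω => (A ω, B ω, C ω)) with hp
  have hpm : IsPMF p := law_pmf hμ _
  have h := entropy_submodular hpm
  have hB : (fun b : β => ∑ a, ∑ c, p (a, b, c)) = law μ B := by
    funext b
    rw [← law_proj2 p b, ← law_comp]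
  have hAB : (fun x : α × β => ∑ c, p (x.1, x.2, c))
      = law μ (fun ω => (A ω, B ω)) := by
    funext x
    rw [show (∑ c, p (x.1, x.2, c)) = law p (fun t => (t.1, t.2.1)) (x.1, x.2) from
      (law_proj12 p x.1 x.2).symm, ← law_comp]
  have hBC : (fun x : β × γ => ∑ a, p (a, x.1, x.2))
      = law μ (fun ω => (B ω, C ω)) := by
    funext x
    rw [← law_proj23 p x, ← law_comp]
  rw [hB, hAB, hBC] at h
  exact h

/-- subadditivity for a joint pmf on a product -/
lemma entropy_subadd {q : α × γ → ℝ} (hq : IsPMF q) :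
    entropy q ≤ entropy (fun a => ∑ c, q (a, c))
      + entropy (fun c => ∑ a, q (a, c)) := by
  have e1 : Function.Injective (fun x : α × γ => (x.1, Unit.unit, x.2)) := by
    intro x y h
    simp only [Prod.mk.injEq] at h
    exact Prod.ext h.1 h.2.2
  set p : α × Unit × γ → ℝ := law q (fun x : α × γ => (x.1, Unit.unit, x.2)) with hp
  have hpm : IsPMF p := law_pmf hq _
  have h := entropy_submodular hpm
  have hpq : ∀ a c, p (a, Unit.unit, c) = q (a, c) := fun a c =>
    law_apply_eq q e1 (a, c)
  have hent : entropy p = entropy q := entropy_law_inj q e1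
  have h2 : entropy (fun b : Unit => ∑ a, ∑ c, p (a, b, c)) = 0 := by
    have : ∀ b : Unit, (∑ a, ∑ c, p (a, b, c)) = 1 := by
      intro b
      have : (∑ a, ∑ c, p (a, b, c)) = ∑ a, ∑ c, q (a, c) := by
        refine Finset.sum_congr rfl fun a _ => Finset.sum_congr rfl fun c _ => hpq a c
      rw [this, ← Fintype.sum_prod_type, hq.2]
    unfold entropy
    simp [this]
  have h12 : entropy (fun x : α × Unit => ∑ c, p (x.1, x.2, c))
      = entropy (fun a => ∑ c, q (a, c)) := by
    have einj : Function.Injective (fun a : α => (a, Unit.unit)) := by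
      intro x y h
      simpa using h
    rw [show (fun x : α × Unit => ∑ c, p (x.1, x.2, c))
        = law (fun a => ∑ c, q (a, c)) (fun a => (a, Unit.unit)) from ?_]
    · exact entropy_law_inj _ einj
    · funext x
      have : law (fun a => ∑ c, q (a, c)) (fun a => (a, Unit.unit)) (x.1, x.2)
          = ∑ c, q (x.1, c) := law_apply_eq _ einj x.1
      rw [this]
      exact Finset.sum_congr rfl fun c _ => hpq x.1 c
  have h23 : entropy (fun x : Unit × γ => ∑ a, p (a, x.1, x.2))
      = entropy (fun c => ∑ a, q (a, c)) := by
    have einj : Function.Injective (fun c : γ => (Unit.unit, c)) := by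
      intro x y h
      simpa using h
    rw [show (fun x : Unit × γ => ∑ a, p (a, x.1, x.2))
        = law (fun c => ∑ a, q (a, c)) (fun c => (Unit.unit, c)) from ?_]
    · exact entropy_law_inj _ einj
    · funext x
      have : law (fun c => ∑ a, q (a, c)) (fun c => (Unit.unit, c)) (x.1, x.2)
          = ∑ a, q (a, x.2) := law_apply_eq _ einj x.2
      rw [this]
      exact Finset.sum_congr rfl fun a _ => hpq a x.2
  rw [hent, h2, h12, h23] at h
  linarith

/-- subadditivity at the random-variable level -/
lemma Hsubadd (hμ : IsPMF μ) (A : Ω → α) (B : Ω → β) :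
    entropy (law μ (fun ω => (A ω, B ω)))
      ≤ entropy (law μ A) + entropy (law μ B) := by
  have h := entropy_subadd (law_pmf hμ (fun ω => (A ω, B ω)))
  have hA : (fun a => ∑ b, law μ (fun ω => (A ω, B ω)) (a, b)) = law μ A := by
    funext a
    rw [show (∑ b, law μ (fun ω => (A ω, B ω)) (a, b))
      = law (law μ (fun ω => (A ω, B ω))) Prod.fst a from (law_fst _ a).symm, ← law_comp]
  have hB : (fun b => ∑ a, law μ (fun ω => (A ω, B ω)) (a, b)) = law μ B := by
    funext b
    rw [show (∑ a, law μ (fun ω => (A ω, B ω)) (a, b))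
      = law (law μ (fun ω => (A ω, B ω))) Prod.snd b from (law_snd _ b).symm, ← law_comp]
  rw [hA, hB] at h
  exact h

/-- conditioning on less information increases conditional entropy -/
lemma Hconddp (hμ : IsPMF μ) (A : Ω → α) (B : Ω → β) (φ : β → γ) :
    entropy (law μ (fun ω => (A ω, B ω)))
      + entropy (law μ (fun ω => φ (B ω)))
      ≤ entropy (law μ (fun ω => (A ω, φ (B ω)))) + entropy (law μ B) := by
  have h := Hsubmodular hμ A (fun ω => φ (B ω)) B
  have e1 : entropy (law μ (fun ω => (A ω, φ (B ω), B ω)))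
      = entropy (law μ (fun ω => (A ω, B ω))) := by
    refine Hrel hμ (e := fun x : α × β => (x.1, φ x.2, x.2)) ?_ (fun ω => rfl)
    intro x y hxy
    simp only [Prod.mk.injEq] at hxy
    exact Prod.ext hxy.1 hxy.2.2
  have e2 : entropy (law μ (fun ω => (φ (B ω), B ω))) = entropy (law μ B) := by
    refine Hrel hμ (e := fun b : β => (φ b, b)) ?_ (fun ω => rfl)
    intro x y hxy
    simp only [Prod.mk.injEq] at hxy
    exact hxy.2
  rw [e1, e2] at h
  exact h

end Lib4


section Lib5
variable {Ω : Type*} [Fintype Ω] {μ : Ω → ℝ}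
variable {β 𝒳 : Type*} [Fintype β] [Fintype 𝒳] [DecidableEq β] [DecidableEq 𝒳]

lemma Hcondsubadd (hμ : IsPMF μ) :
    ∀ {n : ℕ} (Ys : Ω → Fin n → 𝒳) (B : Ω → β),
    entropy (law μ (fun ω => (Ys ω, B ω))) - entropy (law μ B)
      ≤ ∑ t, (entropy (law μ (fun ω => (Ys ω t, B ω))) - entropy (law μ B)) := by
  intro n
  induction n with
  | zero =>
    intro Ys B
    have h0 : entropy (law μ (fun ω => (Ys ω, B ω))) = entropy (law μ B) := by
      refine Hrel hμ (e := fun b : β => ((fun i : Fin 0 => i.elim0), b))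
        (fun x y h => by simpa using h) ?_
      intro ω
      have : Ys ω = (fun i : Fin 0 => i.elim0) := funext fun i => i.elim0
      rw [this]
    rw [h0]
    simp
  | succ n ih =>
    intro Ys B
    have h1 : entropy (law μ (fun ω => (Ys ω, B ω)))
        = entropy (law μ (fun ω =>
            (Ys ω 0, ((fun i : Fin n => Ys ω i.succ), B ω)))) := by
      refine Hrel hμ
        (e := fun x : 𝒳 × ((Fin n → 𝒳) × β) => (Fin.cons x.1 x.2.1, x.2.2)) ?_ ?_
      · intro x y h
        simp only [Prod.mk.injEq] at h
        obtain ⟨ha, hb⟩ := h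
        have hx : x.1 = y.1 := by
          have := congrFun ha 0
          simpa using this
        have ht : x.2.1 = y.2.1 := funext fun i => by
          have := congrFun ha i.succ
          simpa using this
        exact Prod.ext hx (Prod.ext ht hb)
      · intro ω
        refine Prod.ext ?_ rfl
        exact (Fin.cons_self_tail (Ys ω)).symm
    have h2 : entropy (law μ (fun ω =>
            (Ys ω 0, ((fun i : Fin n => Ys ω i.succ), B ω))))
          + entropy (law μ B)
        ≤ entropy (law μ (fun ω => (Ys ω 0, B ω)))
          + entropy (law μ (fun ω => ((fun i : Fin n => Ys ω i.succ), B ω))) :=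
      Hconddp hμ (fun ω => Ys ω 0)
        (fun ω => ((fun i : Fin n => Ys ω i.succ), B ω)) Prod.snd
    have h3 : entropy (law μ (fun ω => ((fun i : Fin n => Ys ω i.succ), B ω)))
          - entropy (law μ B)
        ≤ ∑ t : Fin n,
          (entropy (law μ (fun ω => (Ys ω t.succ, B ω))) - entropy (law μ B)) :=
      ih (fun ω (i : Fin n) => Ys ω i.succ) B
    rw [Fin.sum_univ_succ]
    linarith

end Lib5

section Lib6

lemma condMI_eq {X Y Z : Type*} [Fintype X] [Fintype Y] [Fintype Z]
    {p : X × Y × Z → ℝ} (hp : IsPMF p) :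
    condMI p = entropy (fun xz : X × Z => ∑ y, p (xz.1, y, xz.2))
      + entropy (fun yz : Y × Z => ∑ x, p (x, yz.1, yz.2))
      - entropy p - entropy (fun z : Z => ∑ x, ∑ y, p (x, y, z)) := by
  set Sxz : X → Z → ℝ := fun x z => ∑ y, p (x, y, z) with hSxz
  set Syz : Y → Z → ℝ := fun y z => ∑ x, p (x, y, z) with hSyz
  set Sz : Z → ℝ := fun z => ∑ x, ∑ y, p (x, y, z) with hSz
  have hpnn := hp.1
  have hple1 : ∀ x y z, p (x, y, z) ≤ Sxz x z := fun x y z =>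
    Finset.single_le_sum (fun y _ => hpnn (x, y, z)) (Finset.mem_univ y)
  have hple2 : ∀ x y z, p (x, y, z) ≤ Syz y z := fun x y z =>
    Finset.single_le_sum (fun x _ => hpnn (x, y, z)) (Finset.mem_univ x)
  have h1le : ∀ x z, Sxz x z ≤ Sz z := fun x z =>
    Finset.single_le_sum (f := fun x => ∑ y, p (x, y, z))
      (fun x _ => Finset.sum_nonneg fun y _ => hpnn _) (Finset.mem_univ x)
  -- pointwise expansion
  have pt : ∀ x y z, p (x, y, z) * Real.log (p (x, y, z) * Sz z / (Sxz x z * Syz y z))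
      = p (x, y, z) * Real.log (p (x, y, z)) + p (x, y, z) * Real.log (Sz z)
        - p (x, y, z) * Real.log (Sxz x z) - p (x, y, z) * Real.log (Syz y z) := by
    intro x y z
    by_cases h0 : p (x, y, z) = 0
    · simp [h0]
    have hpp : 0 < p (x, y, z) := lt_of_le_of_ne (hpnn _) (Ne.symm h0)
    have h1 : 0 < Sxz x z := lt_of_lt_of_le hpp (hple1 x y z)
    have h2 : 0 < Syz y z := lt_of_lt_of_le hpp (hple2 x y z)
    have h3 : 0 < Sz z := lt_of_lt_of_le h1 (h1le x z)
    rw [Real.log_div (by positivity) (by positivity),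
      Real.log_mul h0 (ne_of_gt h3), Real.log_mul (ne_of_gt h1) (ne_of_gt h2)]
    ring
  -- the four marginal-entropy identities as triple sums
  have e_xz : entropy (fun xz : X × Z => ∑ y, p (xz.1, y, xz.2))
      = -∑ x, ∑ y, ∑ z, p (x, y, z) * Real.log (Sxz x z) := by
    unfold entropy
    rw [Fintype.sum_prod_type]
    congr 1
    refine Finset.sum_congr rfl fun x _ => ?_
    calc ∑ z, (∑ y, p (x, y, z)) * Real.log (Sxz x z)
        = ∑ z, ∑ y, p (x, y, z) * Real.log (Sxz x z) :=
          Finset.sum_congr rfl fun z _ => Finset.sum_mul _ _ _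
      _ = ∑ y, ∑ z, p (x, y, z) * Real.log (Sxz x z) := Finset.sum_comm
  have e_yz : entropy (fun yz : Y × Z => ∑ x, p (x, yz.1, yz.2))
      = -∑ x, ∑ y, ∑ z, p (x, y, z) * Real.log (Syz y z) := by
    unfold entropy
    rw [Fintype.sum_prod_type]
    congr 1
    calc ∑ y, ∑ z, (∑ x, p (x, y, z)) * Real.log (Syz y z)
        = ∑ y, ∑ z, ∑ x, p (x, y, z) * Real.log (Syz y z) :=
          Finset.sum_congr rfl fun y _ => Finset.sum_congr rfl fun z _ =>
            Finset.sum_mul _ _ _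
      _ = ∑ y, ∑ x, ∑ z, p (x, y, z) * Real.log (Syz y z) :=
          Finset.sum_congr rfl fun y _ => Finset.sum_comm
      _ = ∑ x, ∑ y, ∑ z, p (x, y, z) * Real.log (Syz y z) := Finset.sum_comm
  have e_z : entropy Sz = -∑ x, ∑ y, ∑ z, p (x, y, z) * Real.log (Sz z) := by
    unfold entropy
    congr 1
    calc ∑ z, Sz z * Real.log (Sz z)
        = ∑ z, ∑ x, ∑ y, p (x, y, z) * Real.log (Sz z) := by
          refine Finset.sum_congr rfl fun z _ => ?_
          rw [show Sz z * Real.log (Sz z)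
              = (∑ x, ∑ y, p (x, y, z)) * Real.log (Sz z) from rfl]
          rw [Finset.sum_mul]
          exact Finset.sum_congr rfl fun x _ => Finset.sum_mul _ _ _
      _ = ∑ x, ∑ z, ∑ y, p (x, y, z) * Real.log (Sz z) := Finset.sum_comm
      _ = ∑ x, ∑ y, ∑ z, p (x, y, z) * Real.log (Sz z) :=
          Finset.sum_congr rfl fun x _ => Finset.sum_comm
  have e_p : entropy p = -∑ x, ∑ y, ∑ z, p (x, y, z) * Real.log (p (x, y, z)) := by
    unfold entropy
    rw [Fintype.sum_prod_type]
    congr 1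
    exact Finset.sum_congr rfl fun x _ => by rw [Fintype.sum_prod_type]
  have cmi : condMI p = ∑ x, ∑ y, ∑ z,
      (p (x, y, z) * Real.log (p (x, y, z)) + p (x, y, z) * Real.log (Sz z)
        - p (x, y, z) * Real.log (Sxz x z) - p (x, y, z) * Real.log (Syz y z)) := by
    unfold condMI
    exact Finset.sum_congr rfl fun x _ => Finset.sum_congr rfl fun y _ =>
      Finset.sum_congr rfl fun z _ => pt x y z
  rw [cmi, e_xz, e_yz, e_z, e_p]
  rw [show ∀ w1 w2 w3 w4 : ℝ, -w3 + -w4 - -w1 - -w2 = (w1 + w2) - w3 - w4 from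
    fun _ _ _ _ => by ring]
  rw [← Finset.sum_add_distrib, ← Finset.sum_sub_distrib, ← Finset.sum_sub_distrib]
  refine Finset.sum_congr rfl fun x _ => ?_
  rw [← Finset.sum_add_distrib, ← Finset.sum_sub_distrib, ← Finset.sum_sub_distrib]
  refine Finset.sum_congr rfl fun y _ => ?_
  rw [← Finset.sum_add_distrib, ← Finset.sum_sub_distrib, ← Finset.sum_sub_distrib]

end Lib6


section Lib7

lemma condMI_mix {X M' K' Z : Type*} [Fintype X] [Fintype M'] [Fintype K']
    [Fintype Z] {n : ℕ} (hn : 0 < n)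
    (p : Fin n → X × (M' × K') × Z → ℝ)
    (m : X → Z → ℝ)
    (hm : ∀ t x z, (∑ yk : M' × K', p t (x, yk, z)) = m x z) :
    condMI (fun u : X × (M' × K' × Fin n) × Z =>
        (1 / (n : ℝ)) * p u.2.1.2.2 (u.1, (u.2.1.1, u.2.1.2.1), u.2.2))
      = (1 / (n : ℝ)) * ∑ t, condMI (p t) := by
  have hc : (1 / (n : ℝ)) ≠ 0 := by
    simp only [ne_eq, one_div, inv_eq_zero, Nat.cast_eq_zero]
    omega
  -- common Z-sum of m
  -- the XZ marginal of the mixture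
  have fact1 : ∀ x z, (∑ y : M' × K' × Fin n,
      (1 / (n : ℝ)) * p y.2.2 (x, (y.1, y.2.1), z)) = m x z := by
    intro x z
    rw [Fintype.sum_prod_type]
    calc ∑ a : M', ∑ v : K' × Fin n, (1 / (n : ℝ)) * p v.2 (x, (a, v.1), z)
        = ∑ a : M', ∑ k : K', ∑ t : Fin n, (1 / (n : ℝ)) * p t (x, (a, k), z) :=
          Finset.sum_congr rfl fun a _ => by rw [Fintype.sum_prod_type]
      _ = ∑ t : Fin n, ∑ a : M', ∑ k : K', (1 / (n : ℝ)) * p t (x, (a, k), z) := by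
          rw [show (∑ a : M', ∑ k : K', ∑ t : Fin n,
              (1 / (n : ℝ)) * p t (x, (a, k), z))
            = ∑ a : M', ∑ t : Fin n, ∑ k : K',
              (1 / (n : ℝ)) * p t (x, (a, k), z) from
            Finset.sum_congr rfl fun a _ => Finset.sum_comm]
          exact Finset.sum_comm
      _ = ∑ t : Fin n, (1 / (n : ℝ)) * (∑ yk : M' × K', p t (x, yk, z)) := by
          refine Finset.sum_congr rfl fun t _ => ?_
          rw [Fintype.sum_prod_type, Finset.mul_sum]
          exact Finset.sum_congr rfl fun a _ => (Finset.mul_sum _ _ _).symm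
      _ = ∑ t : Fin n, (1 / (n : ℝ)) * m x z :=
          Finset.sum_congr rfl fun t _ => by rw [hm]
      _ = m x z := by
          rw [Finset.sum_const, Finset.card_univ, Fintype.card_fin, nsmul_eq_mul]
          field_simp
  have fact2 : ∀ (y : M' × K' × Fin n) z, (∑ x,
      (1 / (n : ℝ)) * p y.2.2 (x, (y.1, y.2.1), z))
      = (1 / (n : ℝ)) * ∑ x, p y.2.2 (x, (y.1, y.2.1), z) := fun y z =>
    (Finset.mul_sum _ _ _).symm
  -- rewrite the generic integrand
  unfold condMI
  -- outer transformation
  have main : ∀ x z (a : M') (k : K') (t : Fin n),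
      ((1 / (n : ℝ)) * p t (x, (a, k), z)) *
        Real.log (((1 / (n : ℝ)) * p t (x, (a, k), z)) *
            (∑ x', ∑ y' : M' × K' × Fin n,
              (1 / (n : ℝ)) * p y'.2.2 (x', (y'.1, y'.2.1), z)) /
          ((∑ y' : M' × K' × Fin n,
              (1 / (n : ℝ)) * p y'.2.2 (x, (y'.1, y'.2.1), z)) *
            (∑ x', (1 / (n : ℝ)) * p t (x', (a, k), z))))
      = (1 / (n : ℝ)) * (p t (x, (a, k), z) *
          Real.log (p t (x, (a, k), z) * (∑ x', m x' z) /
            (m x z * (∑ x', p t (x', (a, k), z))))) := by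
    intro x z a k t
    have h1 : (∑ x', ∑ y' : M' × K' × Fin n,
        (1 / (n : ℝ)) * p y'.2.2 (x', (y'.1, y'.2.1), z)) = ∑ x', m x' z :=
      Finset.sum_congr rfl fun x' _ => fact1 x' z
    have h2 : (∑ y' : M' × K' × Fin n,
        (1 / (n : ℝ)) * p y'.2.2 (x, (y'.1, y'.2.1), z)) = m x z := fact1 x z
    have h3 : (∑ x', (1 / (n : ℝ)) * p t (x', (a, k), z))
        = (1 / (n : ℝ)) * ∑ x', p t (x', (a, k), z) := (Finset.mul_sum _ _ _).symm
    rw [h1, h2, h3]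
    have cancel : ((1 / (n : ℝ)) * p t (x, (a, k), z)) * (∑ x', m x' z) /
        (m x z * ((1 / (n : ℝ)) * ∑ x', p t (x', (a, k), z)))
        = p t (x, (a, k), z) * (∑ x', m x' z) /
          (m x z * (∑ x', p t (x', (a, k), z))) := by
      rw [show ((1 / (n : ℝ)) * p t (x, (a, k), z)) * (∑ x', m x' z)
          = (1 / (n : ℝ)) * (p t (x, (a, k), z) * (∑ x', m x' z)) from by ring]
      rw [show m x z * ((1 / (n : ℝ)) * ∑ x', p t (x', (a, k), z))
          = (1 / (n : ℝ)) * (m x z * (∑ x', p t (x', (a, k), z))) from by ring]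
      exact mul_div_mul_left _ _ hc
    rw [cancel]
    ring
  -- now both sides
  calc ∑ x, ∑ y : M' × K' × Fin n, ∑ z,
        ((1 / (n : ℝ)) * p y.2.2 (x, (y.1, y.2.1), z)) *
          Real.log (((1 / (n : ℝ)) * p y.2.2 (x, (y.1, y.2.1), z)) *
              (∑ x', ∑ y' : M' × K' × Fin n,
                (1 / (n : ℝ)) * p y'.2.2 (x', (y'.1, y'.2.1), z)) /
            ((∑ y' : M' × K' × Fin n,
                (1 / (n : ℝ)) * p y'.2.2 (x, (y'.1, y'.2.1), z)) *
              (∑ x', (1 / (n : ℝ)) * p y.2.2 (x', (y.1, y.2.1), z))))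
      = ∑ x, ∑ y : M' × K' × Fin n, ∑ z,
          (1 / (n : ℝ)) * (p y.2.2 (x, (y.1, y.2.1), z) *
            Real.log (p y.2.2 (x, (y.1, y.2.1), z) * (∑ x', m x' z) /
              (m x z * (∑ x', p y.2.2 (x', (y.1, y.2.1), z))))) := by
        refine Finset.sum_congr rfl fun x _ => Finset.sum_congr rfl fun y _ =>
          Finset.sum_congr rfl fun z _ => main x z y.1 y.2.1 y.2.2
    _ = (1 / (n : ℝ)) * ∑ t, ∑ x, ∑ a : M', ∑ k : K', ∑ z,
          (p t (x, (a, k), z) *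
            Real.log (p t (x, (a, k), z) * (∑ x', m x' z) /
              (m x z * (∑ x', p t (x', (a, k), z))))) := by
        rw [Finset.mul_sum]
        set G : Fin n → X → M' → K' → Z → ℝ := fun t x a k z =>
          p t (x, (a, k), z) *
            Real.log (p t (x, (a, k), z) * (∑ x', m x' z) /
              (m x z * (∑ x', p t (x', (a, k), z)))) with hG
        calc ∑ x, ∑ y : M' × K' × Fin n, ∑ z, (1 / (n : ℝ)) * G y.2.2 x y.1 y.2.1 z
            = ∑ x, ∑ a : M', ∑ k : K', ∑ t, ∑ z, (1 / (n : ℝ)) * G t x a k z := by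
              refine Finset.sum_congr rfl fun x _ => ?_
              rw [Fintype.sum_prod_type]
              refine Finset.sum_congr rfl fun a _ => ?_
              rw [Fintype.sum_prod_type]
          _ = ∑ x, ∑ a : M', ∑ t, ∑ k : K', ∑ z, (1 / (n : ℝ)) * G t x a k z :=
              Finset.sum_congr rfl fun x _ => Finset.sum_congr rfl fun a _ =>
                Finset.sum_comm
          _ = ∑ x, ∑ t, ∑ a : M', ∑ k : K', ∑ z, (1 / (n : ℝ)) * G t x a k z :=
              Finset.sum_congr rfl fun x _ => Finset.sum_comm
          _ = ∑ t, ∑ x, ∑ a : M', ∑ k : K', ∑ z, (1 / (n : ℝ)) * G t x a k z :=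
              Finset.sum_comm
          _ = ∑ t, (1 / (n : ℝ)) * ∑ x, ∑ a : M', ∑ k : K', ∑ z, G t x a k z := by
              refine Finset.sum_congr rfl fun t _ => ?_
              rw [Finset.mul_sum]
              refine Finset.sum_congr rfl fun x _ => ?_
              rw [Finset.mul_sum]
              refine Finset.sum_congr rfl fun a _ => ?_
              rw [Finset.mul_sum]
              refine Finset.sum_congr rfl fun k _ => ?_
              rw [Finset.mul_sum]
    _ = (1 / (n : ℝ)) * ∑ t, ∑ x, ∑ y : M' × K', ∑ z,
          p t (x, y, z) *
            Real.log (p t (x, y, z) * (∑ x', ∑ y' : M' × K', p t (x', y', z)) /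
              ((∑ y' : M' × K', p t (x, y', z)) * (∑ x', p t (x', y, z)))) := by
        congr 1
        refine Finset.sum_congr rfl fun t _ => Finset.sum_congr rfl fun x _ => ?_
        rw [Fintype.sum_prod_type]
        refine Finset.sum_congr rfl fun a _ => Finset.sum_congr rfl fun k _ =>
          Finset.sum_congr rfl fun z _ => ?_
        rw [show (∑ x', ∑ y' : M' × K', p t (x', y', z)) = ∑ x', m x' z from
          Finset.sum_congr rfl fun x' _ => hm t x' z]
        rw [show (∑ y' : M' × K', p t (x, y', z)) = m x z from hm t x z]

end Lib7


section Lib8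
variable {α β γ : Type*} [Fintype α] [Fintype β] [Fintype γ]

lemma law_proj13 [DecidableEq α] [DecidableEq γ] (p : α × β × γ → ℝ) (a : α) (c : γ) :
    law p (fun t => (t.1, t.2.2)) (a, c) = ∑ b, p (a, b, c) := by
  unfold law
  rw [Fintype.sum_prod_type]
  rw [Finset.sum_eq_single a]
  · rw [Fintype.sum_prod_type]
    refine Finset.sum_congr rfl fun b _ => ?_
    calc ∑ c' : γ, (if ((a, (b, c')).1, (a, (b, c')).2.2) = (a, c) then p (a, b, c') else 0)
        = ∑ c' : γ, (if c' = c then p (a, b, c') else 0) :=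
          Finset.sum_congr rfl fun c' _ => if_congr (by simp) rfl rfl
      _ = p (a, b, c) := by
          rw [Finset.sum_ite_eq' Finset.univ c (fun c' => p (a, b, c'))]
          simp
  · intro a' _ ha'
    rw [Fintype.sum_prod_type]
    exact Finset.sum_eq_zero fun b _ => Finset.sum_eq_zero fun c' _ =>
      if_neg (by simp [ha'])
  · simp

end Lib8

/-- Converse step: if `(X^n, Z^n)` are i.i.d. pairs, `K` is independent of `(X^n, Z^n)`,
`M = f_n(X^n, Z^n, K)` and `Y^n = g_n(M, Z^n, K)` for possibly stochastic
encoder/decoder (modelled by the kernels `enc` and `dec`), the pairs `(Y_i, Z_i)` are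
jointly i.i.d., and `T` is uniform on `{1,…,n}` and independent of everything else, then
`H(M,K) ≥ n · I(Y_T ; (M,K,T) | Z_T)`. -/
theorem entropy_message_randomness_ge_timeshared_mutual_info
    {Ω 𝒳 𝒵 𝓜 𝒦 : Type} [Fintype Ω] [Fintype 𝒳] [DecidableEq 𝒳]
    [Fintype 𝒵] [DecidableEq 𝒵] [Fintype 𝓜] [DecidableEq 𝓜]
    [Fintype 𝒦] [DecidableEq 𝒦] {n : ℕ} (hn : 0 < n)
    (μ : Ω → ℝ) (hμ : IsPMF μ)
    (Xs : Ω → Fin n → 𝒳) (Zs : Ω → Fin n → 𝒵) (K : Ω → 𝒦) (M : Ω → 𝓜)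
    (Ys : Ω → Fin n → 𝒳)
    (pXZ : 𝒳 × 𝒵 → ℝ)
    (hiid : ∀ xs zs, law μ (fun ω => (Xs ω, Zs ω)) (xs, zs) = ∏ i, pXZ (xs i, zs i))
    (hK : ∀ xs zs k, law μ (fun ω => (Xs ω, Zs ω, K ω)) (xs, zs, k)
        = law μ (fun ω => (Xs ω, Zs ω)) (xs, zs) * law μ K k)
    (enc : (Fin n → 𝒳) → (Fin n → 𝒵) → 𝒦 → 𝓜 → ℝ)
    (henc : ∀ xs zs k, IsPMF (enc xs zs k))
    (hM : ∀ xs zs k m, law μ (fun ω => (Xs ω, Zs ω, K ω, M ω)) (xs, zs, k, m)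
        = law μ (fun ω => (Xs ω, Zs ω, K ω)) (xs, zs, k) * enc xs zs k m)
    (dec : 𝓜 → (Fin n → 𝒵) → 𝒦 → (Fin n → 𝒳) → ℝ)
    (hdec : ∀ m zs k, IsPMF (dec m zs k))
    (hY : ∀ xs zs k m ys,
      law μ (fun ω => (Xs ω, Zs ω, K ω, M ω, Ys ω)) (xs, zs, k, m, ys)
        = law μ (fun ω => (Xs ω, Zs ω, K ω, M ω)) (xs, zs, k, m) * dec m zs k ys)
    (hYZiid : ∃ r : 𝒳 × 𝒵 → ℝ, IsPMF r ∧
      ∀ ys zs, law μ (fun ω => (Ys ω, Zs ω)) (ys, zs) = ∏ i, r (ys i, zs i)) :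
    (n : ℝ) * condMI (fun t : 𝒳 × (𝓜 × 𝒦 × Fin n) × 𝒵 =>
        (1 / (n : ℝ)) *
          law μ (fun ω => (Ys ω t.2.1.2.2, M ω, K ω, Zs ω t.2.1.2.2))
            (t.1, t.2.1.1, t.2.1.2.1, t.2.2))
      ≤ entropy (law μ (fun ω => (M ω, K ω))) := by
  classical
  obtain ⟨r, hr, hprod⟩ := hYZiid
  have hrZ : IsPMF (fun z : 𝒵 => ∑ x, r (x, z)) := by
    constructor
    · intro z; exact Finset.sum_nonneg fun x _ => hr.1 _
    · rw [← hr.2, Fintype.sum_prod_type]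
      exact Finset.sum_comm
  have hPYZ : law μ (fun ω => (Ys ω, Zs ω))
      = fun v : (Fin n → 𝒳) × (Fin n → 𝒵) => ∏ i, r (v.1 i, v.2 i) :=
    funext fun v => hprod v.1 v.2
  have hYZt : ∀ (t : Fin n) (x : 𝒳) (z : 𝒵),
      law μ (fun ω => (Ys ω t, Zs ω t)) (x, z) = r (x, z) := by
    intro t x z
    have e1 : law μ (fun ω => (Ys ω t, Zs ω t))
        = law (law μ (fun ω => (Ys ω, Zs ω))) (fun v => (v.1 t, v.2 t)) :=
      law_comp μ (fun ω => (Ys ω, Zs ω)) (fun v => (v.1 t, v.2 t))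
    rw [e1, hPYZ]
    unfold law
    rw [← Equiv.sum_comp (Equiv.arrowProdEquivProdArrow (Fin n) (fun _ => 𝒳) (fun _ => 𝒵))
      (fun v : (Fin n → 𝒳) × (Fin n → 𝒵) =>
        if (v.1 t, v.2 t) = (x, z) then ∏ i, r (v.1 i, v.2 i) else 0)]
    exact sum_prod_marg hr t (x, z)
  have hm' : ∀ (t : Fin n) (x : 𝒳) (z : 𝒵),
      (∑ yk : 𝓜 × 𝒦,
        law μ (fun ω => (Ys ω t, (M ω, K ω), Zs ω t)) (x, yk, z)) = r (x, z) := by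
    intro t x z
    rw [← law_proj13 (law μ (fun ω => (Ys ω t, (M ω, K ω), Zs ω t))) x z, ← law_comp]
    exact hYZt t x z
  have hZprod : law μ Zs = fun zs => ∏ i, (∑ x, r (x, zs i)) := by
    funext zs
    have e1 : law μ Zs = law (law μ (fun ω => (Ys ω, Zs ω))) Prod.snd :=
      law_comp μ (fun ω => (Ys ω, Zs ω)) Prod.snd
    rw [e1, law_snd, hPYZ]
    exact sum_prod_fun (fun (i : Fin n) (x : 𝒳) => r (x, zs i))
  have hYZn : entropy (law μ (fun ω => (Ys ω, Zs ω))) = (n : ℝ) * entropy r := by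
    rw [hPYZ]
    calc entropy (fun v : (Fin n → 𝒳) × (Fin n → 𝒵) => ∏ i, r (v.1 i, v.2 i))
        = entropy (fun f : Fin n → 𝒳 × 𝒵 => ∏ i, r (f i)) :=
          (entropy_comp_equiv (Equiv.arrowProdEquivProdArrow (Fin n) (fun _ => 𝒳) (fun _ => 𝒵))
            (fun v : (Fin n → 𝒳) × (Fin n → 𝒵) => ∏ i, r (v.1 i, v.2 i))).symm
      _ = (n : ℝ) * entropy r := entropy_prodDist hr n
  have hZn : entropy (law μ Zs) = (n : ℝ) * entropy (fun z : 𝒵 => ∑ x, r (x, z)) := by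
    rw [hZprod]
    exact entropy_prodDist hrZ n
  have hcond : ∀ t : Fin n,
      condMI (law μ (fun ω => (Ys ω t, (M ω, K ω), Zs ω t)))
      = entropy r + entropy (law μ (fun ω => ((M ω, K ω), Zs ω t)))
        - entropy (law μ (fun ω => (Ys ω t, (M ω, K ω), Zs ω t)))
        - entropy (fun z : 𝒵 => ∑ x, r (x, z)) := by
    intro t
    rw [condMI_eq (law_pmf hμ _)]
    have h1 : (fun xz : 𝒳 × 𝒵 => ∑ y : 𝓜 × 𝒦,
        law μ (fun ω => (Ys ω t, (M ω, K ω), Zs ω t)) (xz.1, y, xz.2)) = r :=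
      funext fun xz => hm' t xz.1 xz.2
    have h2 : (fun yz : (𝓜 × 𝒦) × 𝒵 => ∑ x,
        law μ (fun ω => (Ys ω t, (M ω, K ω), Zs ω t)) (x, yz.1, yz.2))
        = law μ (fun ω => ((M ω, K ω), Zs ω t)) := by
      funext yz
      rw [← law_proj23 (law μ (fun ω => (Ys ω t, (M ω, K ω), Zs ω t))) yz, ← law_comp]
    have h3 : (fun z : 𝒵 => ∑ x, ∑ y : 𝓜 × 𝒦,
        law μ (fun ω => (Ys ω t, (M ω, K ω), Zs ω t)) (x, y, z))
        = (fun z : 𝒵 => ∑ x, r (x, z)) :=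
      funext fun z => Finset.sum_congr rfl fun x _ => hm' t x z
    rw [h1, h2, h3]
  have c2 : ∀ t : Fin n,
      entropy (law μ (fun ω => (Ys ω t, ((M ω, K ω), Zs ω))))
        + entropy (law μ (fun ω => ((M ω, K ω), Zs ω t)))
      ≤ entropy (law μ (fun ω => (Ys ω t, (M ω, K ω), Zs ω t)))
        + entropy (law μ (fun ω => ((M ω, K ω), Zs ω))) := fun t =>
    Hconddp hμ (fun ω => Ys ω t) (fun ω => ((M ω, K ω), Zs ω))
      (fun wz => (wz.1, wz.2 t))
  have c1 : entropy (law μ (fun ω => (Ys ω, ((M ω, K ω), Zs ω))))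
      - entropy (law μ (fun ω => ((M ω, K ω), Zs ω)))
      ≤ ∑ t, (entropy (law μ (fun ω => (Ys ω t, ((M ω, K ω), Zs ω))))
          - entropy (law μ (fun ω => ((M ω, K ω), Zs ω)))) :=
    Hcondsubadd hμ Ys (fun ω => ((M ω, K ω), Zs ω))
  have hYB : entropy (law μ (fun ω => (Ys ω, Zs ω)))
      ≤ entropy (law μ (fun ω => (Ys ω, ((M ω, K ω), Zs ω)))) :=
    Hle hμ (e := fun u : (Fin n → 𝒳) × ((𝓜 × 𝒦) × (Fin n → 𝒵)) => (u.1, u.2.2))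
      (fun ω => rfl)
  have hBle : entropy (law μ (fun ω => ((M ω, K ω), Zs ω)))
      ≤ entropy (law μ (fun ω => (M ω, K ω))) + entropy (law μ Zs) :=
    Hsubadd hμ (fun ω => (M ω, K ω)) Zs
  have sum_eq : ∑ t, condMI (law μ (fun ω => (Ys ω t, (M ω, K ω), Zs ω t)))
      = (n : ℝ) * entropy r
        - (n : ℝ) * entropy (fun z : 𝒵 => ∑ x, r (x, z))
        + ∑ t, (entropy (law μ (fun ω => ((M ω, K ω), Zs ω t)))
            - entropy (law μ (fun ω => (Ys ω t, (M ω, K ω), Zs ω t)))) := by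
    rw [Finset.sum_congr rfl fun t _ => hcond t]
    rw [Finset.sum_congr rfl (fun t _ =>
      show entropy r + entropy (law μ (fun ω => ((M ω, K ω), Zs ω t)))
          - entropy (law μ (fun ω => (Ys ω t, (M ω, K ω), Zs ω t)))
          - entropy (fun z : 𝒵 => ∑ x, r (x, z))
        = (entropy r - entropy (fun z : 𝒵 => ∑ x, r (x, z)))
          + (entropy (law μ (fun ω => ((M ω, K ω), Zs ω t)))
            - entropy (law μ (fun ω => (Ys ω t, (M ω, K ω), Zs ω t))))
        from by ring)]
    rw [Finset.sum_add_distrib, Finset.sum_const, Finset.card_univ,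
      Fintype.card_fin, nsmul_eq_mul]
    ring
  have sum_le : ∑ t, (entropy (law μ (fun ω => ((M ω, K ω), Zs ω t)))
      - entropy (law μ (fun ω => (Ys ω t, (M ω, K ω), Zs ω t))))
      ≤ ∑ t, (entropy (law μ (fun ω => ((M ω, K ω), Zs ω)))
          - entropy (law μ (fun ω => (Ys ω t, ((M ω, K ω), Zs ω))))) :=
    Finset.sum_le_sum fun t _ => by have := c2 t; linarith
  have sum_flip : ∑ t, (entropy (law μ (fun ω => ((M ω, K ω), Zs ω)))
          - entropy (law μ (fun ω => (Ys ω t, ((M ω, K ω), Zs ω)))))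
      = - ∑ t, (entropy (law μ (fun ω => (Ys ω t, ((M ω, K ω), Zs ω))))
          - entropy (law μ (fun ω => ((M ω, K ω), Zs ω)))) := by
    rw [← Finset.sum_neg_distrib]
    exact Finset.sum_congr rfl fun t _ => by ring
  have final : ∑ t, condMI (law μ (fun ω => (Ys ω t, (M ω, K ω), Zs ω t)))
      ≤ entropy (law μ (fun ω => (M ω, K ω))) := by
    rw [sum_eq]
    linarith [sum_le, sum_flip, c1, hYB, hBle, hYZn, hZn]
  have hmix : condMI (fun u : 𝒳 × (𝓜 × 𝒦 × Fin n) × 𝒵 =>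
      (1 / (n : ℝ)) * law μ (fun ω => (Ys ω u.2.1.2.2, (M ω, K ω), Zs ω u.2.1.2.2))
        (u.1, (u.2.1.1, u.2.1.2.1), u.2.2))
      = (1 / (n : ℝ)) * ∑ t, condMI (law μ (fun ω => (Ys ω t, (M ω, K ω), Zs ω t))) :=
    condMI_mix hn (fun t => law μ (fun ω => (Ys ω t, (M ω, K ω), Zs ω t)))
      (fun x z => r (x, z)) (fun t x z => hm' t x z)
  have goal_eq : (fun t : 𝒳 × (𝓜 × 𝒦 × Fin n) × 𝒵 =>
        (1 / (n : ℝ)) *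
          law μ (fun ω => (Ys ω t.2.1.2.2, M ω, K ω, Zs ω t.2.1.2.2))
            (t.1, t.2.1.1, t.2.1.2.1, t.2.2))
      = (fun u : 𝒳 × (𝓜 × 𝒦 × Fin n) × 𝒵 =>
        (1 / (n : ℝ)) * law μ (fun ω => (Ys ω u.2.1.2.2, (M ω, K ω), Zs ω u.2.1.2.2))
          (u.1, (u.2.1.1, u.2.1.2.1), u.2.2)) := by
    funext u
    congr 1
    exact law_congr μ _ _ _ _ (fun ω => by
      constructor <;> intro h <;> (simp only [Prod.mk.injEq] at h ⊢; tauto))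
  rw [goal_eq, hmix]
  rw [show (n : ℝ) * ((1 / (n : ℝ)) *
      ∑ t, condMI (law μ (fun ω => (Ys ω t, (M ω, K ω), Zs ω t))))
      = ∑ t, condMI (law μ (fun ω => (Ys ω t, (M ω, K ω), Zs ω t))) from by
    field_simp]
  exact final


end
end
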